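/- arXiv:0912.4650 — 4 statements merged into one kernel-verified Lean document; each statement's English description precedes it below -/
import Mathlib

section
/- Let H₁, …, H_k be harmonic on a connected open set Ω, Γ = ⋃_{i≠j} {H_i = H_j}, and let V be subharmonic on Ω, piecewise harmonic with respect to H₁, …, H_k relative to the null set K = supp(ΔV). Then for every connected component U_α of Ω \ Γ there exists an index i(α) with V = H_{i(α)} on all of U_α. -/
open MeasureTheory Metric

/-- A function is harmonic on `s` if near each point of `s` it is the real part of a
holomorphic function. -/
def HarmonicOn (f : ℂ → ℝ) (s : Set ℂ) : Prop :=
  ∀ z ∈ s, ∃ ε > 0, ∃ g : ℂ → ℂ, DifferentiableOn ℂ g (ball z ε) ∧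
    ∀ w ∈ ball z ε ∩ s, f w = (g w).re

/-- Subharmonic: upper semicontinuous and satisfying the sub-mean-value inequality. -/
def SubharmonicOn (f : ℂ → ℝ) (s : Set ℂ) : Prop :=
  UpperSemicontinuousOn f s ∧
    ∀ z ∈ s, ∀ r > 0, closedBall z r ⊆ s →
      f z ≤ (1 / (2 * Real.pi)) * ∫ θ in (0:ℝ)..(2 * Real.pi),
        f (z + r * Complex.exp (θ * Complex.I))

/-!
Near a point `w` of `Ω \ Γ` the `H i` are pairwise distinct on a disc `B`, hence strictly
ordered there. Off the null set `K`, `V` locally agrees with one of them; let `h` be the largest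
one that occurs, so `V ≤ h` off `K`. For almost every radius a circle meets `K` in a null set of
angles (polar coordinates), so the sub-mean-value inequality gives `V ≤ h` on all of `B`. The set
`{V = h}` is relatively closed in `B` since `V` is upper semicontinuous, and open since equality
in the mean value inequality forces `V = h` almost everywhere on small circles, which rules out
nearby pieces lying strictly below `h`. Hence `V = h` on `B`, so `V` is harmonic near `w` and
`w ∉ K`. Every component of `Ω \ Γ` therefore lies in `Ω \ K`, where `V` is a single `H i` on
components.
-/
open Set Filter Topology Function Real

theorem Function.Periodic.ae_of_ae_restrict_Ioc {α : Type*} {g : ℝ → α} {T : ℝ}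
    (hg : Periodic g T) (hT : 0 < T) (t : ℝ) {P : α → Prop}
    (h : ∀ᵐ θ ∂volume.restrict (Ioc t (t + T)), P (g θ)) : ∀ᵐ θ, P (g θ) := by
  rw [ae_iff]
  refine (isAddFundamentalDomain_Ioc hT t).measure_zero_of_invariant _ ?_ ?_
  · rintro ⟨_, n, rfl⟩
    ext θ
    simp only [mem_vadd_set, mem_ofPred_eq, AddSubgroup.mk_vadd, vadd_eq_add, zsmul_eq_mul]
    constructor
    · rintro ⟨y, hy, rfl⟩
      rwa [add_comm, hg.int_mul n y]
    · exact fun hθ => ⟨θ - n * T, by rwa [hg.sub_int_mul_eq], by ring⟩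
  · rwa [ae_iff, Measure.restrict_apply' measurableSet_Ioc] at h

theorem Complex.ae_polarCoord_symm_notMem {s : Set ℂ} (hs : volume s = 0) :
    ∀ᵐ p : ℝ × ℝ, p ∈ polarCoord.target → Complex.polarCoord.symm p ∉ s := by
  have hs' : MeasurableSet (toMeasurable volume s) := measurableSet_toMeasurable _ _
  have hm : Measurable fun p : ℝ × ℝ => ENNReal.ofReal p.1 •
      (toMeasurable volume s).indicator (1 : ℂ → ENNReal) (Complex.polarCoord.symm p) :=
    (ENNReal.measurable_ofReal.comp measurable_fst).smul
      ((measurable_const.indicator hs').comp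
        (by rw [funext Complex.polarCoord_symm_apply]; fun_prop))
  have h := Complex.lintegral_comp_polarCoord_symm ((toMeasurable volume s).indicator 1)
  rw [lintegral_indicator_one hs', measure_toMeasurable, hs, lintegral_eq_zero_iff hm,
    EventuallyEq, ae_restrict_iff' polarCoord.open_target.measurableSet] at h
  filter_upwards [h] with p hp hpt hps
  have h0 := hp hpt
  rw [indicator_of_mem (subset_toMeasurable _ _ hps), Pi.one_apply, smul_eq_mul, mul_one,
    Pi.zero_apply, ENNReal.ofReal_eq_zero] at h0
  exact (not_le.2 hpt.1) h0

theorem ae_ae_circleMap_notMem {K : Set ℂ} (hK : volume K = 0) (c : ℂ) :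
    ∀ᵐ R : ℝ, 0 < R → ∀ᵐ θ : ℝ, circleMap c R θ ∉ K := by
  have hpolar : ∀ p : ℝ × ℝ, c + Complex.polarCoord.symm p = circleMap c p.1 p.2 := fun p => by
    simp [circleMap, Complex.exp_mul_I, ← Complex.ofReal_cos, ← Complex.ofReal_sin]
  have h := Complex.ae_polarCoord_symm_notMem (s := (c + ·) ⁻¹' K)
    (by rwa [measure_preimage_add])
  simp only [mem_preimage, hpolar, Measure.volume_eq_prod] at h
  filter_upwards [Measure.ae_ae_of_ae_prod h] with R hR hRpos
  refine (periodic_circleMap c R).ae_of_ae_restrict_Ioc (P := (· ∉ K)) two_pi_pos (-π) ?_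
  rw [show -π + 2 * π = π by ring, ← Measure.restrict_congr_set Ioo_ae_eq_Ioc,
    ae_restrict_iff' measurableSet_Ioo]
  exact hR.mono fun θ hθ hθI => hθ ⟨hRpos, hθI⟩

theorem HarmonicOn.harmonicOnNhd {f : ℂ → ℝ} {s : Set ℂ} (hf : HarmonicOn f s) (hs : IsOpen s) :
    InnerProductSpace.HarmonicOnNhd f s := by
  intro z hz
  obtain ⟨ε, hε, g, hg, hfg⟩ := hf z hz
  refine (InnerProductSpace.harmonicAt_congr_nhds ?_).1
    (hg.analyticAt (ball_mem_nhds z hε)).harmonicAt_re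
  filter_upwards [ball_mem_nhds z hε, hs.mem_nhds hz] with w hwε hws
  exact (hfg w ⟨hwε, hws⟩).symm

theorem HarmonicOn.congr_of_eqOn {f g : ℂ → ℝ} {s t : Set ℂ} (hf : HarmonicOn f s) (hts : t ⊆ s)
    (hfg : EqOn g f t) : HarmonicOn g t := by
  intro z hz
  obtain ⟨ε, hε, G, hG, hfG⟩ := hf z (hts hz)
  exact ⟨ε, hε, G, hG, fun w hw => (hfg hw.2).trans (hfG w ⟨hw.1, hts hw.2⟩)⟩

theorem SubharmonicOn.mono {f : ℂ → ℝ} {s t : Set ℂ} (hf : SubharmonicOn f s) (hts : t ⊆ s) :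
    SubharmonicOn f t :=
  ⟨hf.1.mono hts, fun z hz r hr hzr => hf.2 z (hts hz) r hr (hzr.trans hts)⟩

theorem SubharmonicOn.le_circleAverage {f : ℂ → ℝ} {s : Set ℂ} (hf : SubharmonicOn f s) {z : ℂ}
    (hz : z ∈ s) {r : ℝ} (hr : 0 < r) (hzr : closedBall z r ⊆ s) :
    f z ≤ Real.circleAverage f z r := by
  simpa [Real.circleAverage, circleMap] using hf.2 z hz r hr hzr

namespace Real

theorem circleAverage_mono_ae {f g : ℂ → ℝ} {c : ℂ} {R : ℝ} (hf : CircleIntegrable f c R)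
    (hg : CircleIntegrable g c R) (hfg : ∀ᵐ θ, f (circleMap c R θ) ≤ g (circleMap c R θ)) :
    circleAverage f c R ≤ circleAverage g c R := by
  simp only [circleAverage_def, smul_eq_mul]
  gcongr
  exact intervalIntegral.integral_mono_ae_restrict two_pi_pos.le hf hg (ae_restrict_of_ae hfg)

theorem ae_eq_of_circleAverage_le {f g : ℂ → ℝ} {c : ℂ} {R : ℝ} (hf : CircleIntegrable f c R)
    (hg : CircleIntegrable g c R) (hfg : ∀ᵐ θ, f (circleMap c R θ) ≤ g (circleMap c R θ))
    (hgf : circleAverage g c R ≤ circleAverage f c R) :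
    ∀ᵐ θ, f (circleMap c R θ) = g (circleMap c R θ) := by
  have hle :=
    intervalIntegral.integral_mono_ae_restrict two_pi_pos.le hf hg (ae_restrict_of_ae hfg)
  have hge : ∫ θ in 0..2 * π, g (circleMap c R θ) ≤ ∫ θ in 0..2 * π, f (circleMap c R θ) := by
    rw [circleAverage_def, circleAverage_def, smul_eq_mul, smul_eq_mul] at hgf
    exact le_of_mul_le_mul_left hgf (inv_pos.2 two_pi_pos)
  have hzero : ∫ θ in 0..2 * π, (g (circleMap c R θ) - f (circleMap c R θ)) = 0 := by
    rw [intervalIntegral.integral_sub hg hf]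
    linarith
  rw [intervalIntegral.integral_eq_zero_iff_of_nonneg_ae
    (ae_restrict_of_ae (hfg.mono fun θ h => sub_nonneg.2 h)) (hg.sub hf),
    Ioc_eq_empty (not_lt.2 two_pi_pos.le), union_empty] at hzero
  refine (periodic_circleMap c R).ae_of_ae_restrict_Ioc (P := fun z => f z = g z) two_pi_pos 0 ?_
  rw [zero_add]
  filter_upwards [hzero] with θ h
  exact (sub_eq_zero.1 h).symm

end Real

theorem UpperSemicontinuousOn.circleIntegrable_of_ae_mem_Icc {f g h : ℂ → ℝ} {s : Set ℂ} {c : ℂ}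
    {R : ℝ} (hf : UpperSemicontinuousOn f s) (hg : ContinuousOn g s) (hh : ContinuousOn h s)
    (hs : sphere c |R| ⊆ s)
    (hfgh : ∀ᵐ θ, f (circleMap c R θ) ∈ Icc (g (circleMap c R θ)) (h (circleMap c R θ))) :
    CircleIntegrable f c R := by
  have hmaps : MapsTo (circleMap c R) univ s := fun θ _ => hs (circleMap_mem_sphere' c R θ)
  have hmeas : Measurable (f ∘ circleMap c R) :=
    (upperSemicontinuousOn_univ_iff.1
      (hf.comp (continuous_circleMap c R).continuousOn hmaps)).measurable
  have hbound : Continuous fun θ => ‖g (circleMap c R θ)‖ + ‖h (circleMap c R θ)‖ :=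
    ((hg.comp_continuous (continuous_circleMap c R) fun θ => hmaps trivial).norm).add
      ((hh.comp_continuous (continuous_circleMap c R) fun θ => hmaps trivial).norm)
  refine (hbound.intervalIntegrable 0 (2 * π)).mono_fun' hmeas.aestronglyMeasurable
    (ae_restrict_of_ae ?_)
  filter_upwards [hfgh] with θ hθ
  simp only [Real.norm_eq_abs, abs_le] at *
  constructor <;> linarith [neg_abs_le (g (circleMap c R θ)), le_abs_self (h (circleMap c R θ)),
    abs_nonneg (g (circleMap c R θ)), abs_nonneg (h (circleMap c R θ)), hθ.1, hθ.2]

theorem exists_mem_Ioo_ae_circleMap_notMem {K : Set ℂ} (hK : volume K = 0) (c : ℂ) {a b : ℝ}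
    (ha : 0 ≤ a) (hab : a < b) : ∃ R ∈ Ioo a b, ∀ᵐ θ, circleMap c R θ ∉ K := by
  have : (ae (volume.restrict (Ioo a b))).NeBot := ae_restrict_neBot.2 (by simp [hab])
  have hgood : ∀ᵐ R ∂volume.restrict (Ioo a b),
      R ∈ Ioo a b ∧ (0 < R → ∀ᵐ θ, circleMap c R θ ∉ K) :=
    (ae_restrict_mem measurableSet_Ioo).and (ae_restrict_of_ae (ae_ae_circleMap_notMem hK c))
  obtain ⟨R, hR, hgood⟩ := hgood.exists
  exact ⟨R, hR, hgood (ha.trans_lt hR.1)⟩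

theorem exists_mem_of_ae_circleMap {P : ℂ → Prop} {c : ℂ} {R : ℝ}
    (hP : ∀ᵐ θ, P (circleMap c R θ)) {O : Set ℂ} (hO : IsOpen O)
    (hOR : (O ∩ sphere c |R|).Nonempty) : ∃ z ∈ O, P z := by
  rw [← range_circleMap] at hOR
  obtain ⟨_, hzO, θ₀, rfl⟩ := hOR
  have hA : IsOpen (circleMap c R ⁻¹' O) := hO.preimage (continuous_circleMap c R)
  have : (ae (volume.restrict (circleMap c R ⁻¹' O))).NeBot :=
    ae_restrict_neBot.2 (hA.measure_ne_zero volume ⟨θ₀, hzO⟩)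
  obtain ⟨θ, hθO, hθ⟩ := ((ae_restrict_mem hA.measurableSet).and (ae_restrict_of_ae hP)).exists
  exact ⟨_, hθO, hθ⟩

theorem ball_inter_sphere_nonempty {E : Type*} [NormedAddCommGroup E] [NormedSpace ℝ E]
    {x y : E} {ρ η : ℝ} (hρ : 0 ≤ ρ) (hρy : ρ ≤ dist x y) (hη : dist x y - ρ < η) :
    (ball y η ∩ sphere x ρ).Nonempty := by
  rcases (dist_nonneg (x := x) (y := y)).eq_or_lt with hd | hd
  · obtain rfl : ρ = 0 := le_antisymm (hd ▸ hρy) hρ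
    exact ⟨x, by simpa [dist_comm, ← hd] using hη, by simp⟩
  refine ⟨AffineMap.lineMap x y (ρ / dist x y), ?_, ?_⟩
  · rw [mem_ball, dist_lineMap_right, Real.norm_eq_abs,
      abs_of_nonneg (sub_nonneg.2 ((div_le_one hd).2 hρy)), sub_mul, div_mul_cancel₀ _ hd.ne']
    linarith
  · rw [mem_sphere, dist_lineMap_left, Real.norm_eq_abs, abs_of_nonneg (div_nonneg hρ hd.le),
      div_mul_cancel₀ _ hd.ne']

theorem IsPreconnected.forall_lt_of_forall_ne {X α : Type*} [TopologicalSpace X] [LinearOrder α]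
    [TopologicalSpace α] [OrderClosedTopology α] {s : Set X} (hs : IsPreconnected s)
    {f g : X → α} (hf : ContinuousOn f s) (hg : ContinuousOn g s) (hfg : ∀ x ∈ s, f x ≠ g x)
    {a : X} (ha : a ∈ s) (hlt : f a < g a) : ∀ x ∈ s, f x < g x := by
  intro x hx
  by_contra! hle
  obtain ⟨y, hy, hyeq⟩ := hs.intermediate_value₂ ha hx hf hg hlt.le hle
  exact hfg y hy hyeq

theorem isOpen_diff_setOf_exists_eq {X Y ι : Type*} [TopologicalSpace X] [TopologicalSpace Y]
    [T2Space Y] [Finite ι] {s : Set X} {f : ι → X → Y} (hs : IsOpen s)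
    (hf : ∀ i, ContinuousOn (f i) s) : IsOpen (s \ {x | ∃ i j, i ≠ j ∧ f i x = f j x}) := by
  refine isOpen_iff_eventually.2 fun x ⟨hxs, hx⟩ => ?_
  have hne : ∀ i j, ∀ᶠ y in 𝓝 x, i ≠ j → f i y ≠ f j y := fun i j => by
    by_cases hij : i = j
    · simp [hij]
    · exact (((hf i).continuousAt (hs.mem_nhds hxs)).ne_iff_eventually_ne
        ((hf j).continuousAt (hs.mem_nhds hxs))).1 (fun h => hx ⟨i, j, hij, h⟩) |>.mono
          fun y hy _ => hy
  filter_upwards [hs.mem_nhds hxs, eventually_all.2 fun i => eventually_all.2 (hne i)]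
    with y hys hy
  exact ⟨hys, fun ⟨i, j, hij, h⟩ => hy i j hij h⟩

theorem closure_setOf_eq_inter_subset {X : Type*} [TopologicalSpace X] {U : Set X}
    {f g : X → ℝ} (hU : IsOpen U) (hf : UpperSemicontinuousOn f U) (hg : ContinuousOn g U)
    (hfg : ∀ x ∈ U, f x ≤ g x) :
    closure {x | x ∈ U ∧ f x = g x} ∩ U ⊆ {x | x ∈ U ∧ f x = g x} := by
  rintro x ⟨hxc, hxU⟩
  refine ⟨hxU, (hfg x hxU).antisymm (not_lt.1 fun hlt => ?_)⟩
  obtain ⟨c, hfc, hcg⟩ := exists_between hlt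
  have hf' : ∀ᶠ z in 𝓝 x, f z < c := by
    simpa [nhdsWithin_eq_nhds.2 (hU.mem_nhds hxU)] using hf x hxU c hfc
  have hg' : ∀ᶠ z in 𝓝 x, c < g z :=
    (hg.continuousAt (hU.mem_nhds hxU)).eventually (lt_mem_nhds hcg)
  obtain ⟨z, hz, hfz, hgz⟩ :=
    ((mem_closure_iff_frequently.1 hxc).and_eventually (hf'.and hg')).exists
  exact (hfz.trans hgz).ne hz.2

section Rigidity

open InnerProductSpace

variable {U K : Set ℂ} {V g h : ℂ → ℝ}

theorem SubharmonicOn.le_and_ae_eq_of_ae_mem_Icc (hV : SubharmonicOn V U)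
    (hh : HarmonicOnNhd h U) (hg : ContinuousOn g U)
    (hgVh : ∀ y ∈ U \ K, V y ∈ Icc (g y) (h y)) {x : ℂ} {ρ : ℝ} (hρ : 0 < ρ)
    (hxρ : closedBall x ρ ⊆ U) (hK : ∀ᵐ θ, circleMap x ρ θ ∉ K) :
    V x ≤ h x ∧ (V x = h x → ∀ᵐ θ, V (circleMap x ρ θ) = h (circleMap x ρ θ)) := by
  have hsph : sphere x |ρ| ⊆ U := by
    rw [abs_of_pos hρ]; exact sphere_subset_closedBall.trans hxρ
  have hb : ∀ᵐ θ, V (circleMap x ρ θ) ∈ Icc (g (circleMap x ρ θ)) (h (circleMap x ρ θ)) :=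
    hK.mono fun θ hθ => hgVh _ ⟨hsph (circleMap_mem_sphere' x ρ θ), hθ⟩
  have hVi := hV.1.circleIntegrable_of_ae_mem_Icc hg hh.continuousOn hsph hb
  have hhi : CircleIntegrable h x ρ := (hh.continuousOn.mono hsph).circleIntegrable'
  have hle : ∀ᵐ θ, V (circleMap x ρ θ) ≤ h (circleMap x ρ θ) := hb.mono fun θ hθ => hθ.2
  have hsub := hV.le_circleAverage (hxρ (mem_closedBall_self hρ.le)) hρ hxρ
  have hmvp : circleAverage h x ρ = h x :=
    (hh.mono (by rwa [abs_of_pos hρ])).circleAverage_eq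
  refine ⟨hmvp ▸ hsub.trans (circleAverage_mono_ae hVi hhi hle),
    fun heq => ae_eq_of_circleAverage_le hVi hhi hle ?_⟩
  rwa [hmvp, ← heq]

theorem SubharmonicOn.le_of_mem_Icc_off_null (hU : IsOpen U) (hV : SubharmonicOn V U)
    (hh : HarmonicOnNhd h U) (hK : volume K = 0) (hg : ContinuousOn g U)
    (hgVh : ∀ y ∈ U \ K, V y ∈ Icc (g y) (h y)) : ∀ x ∈ U, V x ≤ h x := by
  intro x hx
  obtain ⟨r, hr, hrU⟩ := Metric.isOpen_iff.1 hU x hx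
  obtain ⟨ρ, hρ, hgood⟩ := exists_mem_Ioo_ae_circleMap_notMem hK x le_rfl hr
  exact (hV.le_and_ae_eq_of_ae_mem_Icc hh hg hgVh hρ.1
    ((closedBall_subset_ball hρ.2).trans hrU) hgood).1

theorem SubharmonicOn.isOpen_setOf_eq (hU : IsOpen U) (hV : SubharmonicOn V U)
    (hh : HarmonicOnNhd h U) (hK : volume K = 0) (hg : ContinuousOn g U)
    (hgVh : ∀ y ∈ U \ K, V y ∈ Icc (g y) (h y))
    (hloc : ∀ y ∈ U \ K, V =ᶠ[𝓝 y] h ∨ ∀ᶠ z in 𝓝 y, V z < h z)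
    (hclosed : closure {x | x ∈ U ∧ V x = h x} ∩ U ⊆ {x | x ∈ U ∧ V x = h x}) :
    IsOpen {x | x ∈ U ∧ V x = h x} := by
  refine isOpen_iff_mem_nhds.2 fun x ⟨hxU, hVx⟩ => ?_
  obtain ⟨r, hr, hrU⟩ := Metric.isOpen_iff.1 hU x hxU
  have hoff : ball x r \ K ⊆ {x | x ∈ U ∧ V x = h x} := by
    rintro y ⟨hyr, hyK⟩
    refine ⟨hrU hyr, (hloc y ⟨hrU hyr, hyK⟩).elim (·.eq_of_nhds) fun hlt => ?_⟩
    -- A piece strictly below `h` near `y` meets some circle about `x` in an arc of positive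
    -- measure, whereas `V = h` almost everywhere on every small circle about `x`.
    obtain ⟨η, hη, hηy⟩ := Metric.eventually_nhds_iff_ball.1 hlt
    have hxy : 0 < dist x y :=
      dist_pos.2 fun hxy => (hηy y (mem_ball_self hη)).ne (hxy ▸ hVx)
    obtain ⟨ρ, ⟨hρl, hρr⟩, hgood⟩ := exists_mem_Ioo_ae_circleMap_notMem hK x
      (le_max_left 0 (dist x y - η)) (max_lt hxy (by linarith))
    have hρ : 0 < ρ := (le_max_left _ _).trans_lt hρl
    have hxρ : closedBall x ρ ⊆ U :=
      (closedBall_subset_ball (hρr.trans (mem_ball'.1 hyr))).trans hrU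
    have hae := (hV.le_and_ae_eq_of_ae_mem_Icc hh hg hgVh hρ hxρ hgood).2 hVx
    have hmeet : (ball y η ∩ sphere x |ρ|).Nonempty := by
      rw [abs_of_pos hρ]
      exact ball_inter_sphere_nonempty hρ.le hρr.le
        (by linarith [le_max_right 0 (dist x y - η)])
    obtain ⟨z, hzη, hVz⟩ :=
      exists_mem_of_ae_circleMap (P := fun z => V z = h z) hae isOpen_ball hmeet
    exact ((hηy z hzη).ne hVz).elim
  have hdense : ball x r ⊆ closure (ball x r \ K) :=
    (Measure.dense_of_ae (measure_eq_zero_iff_ae_notMem.1 hK)).open_subset_closure_inter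
      isOpen_ball
  filter_upwards [ball_mem_nhds x hr] with y hy
  exact hclosed ⟨closure_mono hoff (hdense hy), hrU hy⟩

theorem SubharmonicOn.eqOn_of_locally_eq_or_lt (hU : IsOpen U) (hUc : IsPreconnected U)
    (hV : SubharmonicOn V U) (hh : HarmonicOnNhd h U) (hK : volume K = 0)
    (hg : ContinuousOn g U) (hgV : ∀ y ∈ U \ K, g y ≤ V y)
    (hloc : ∀ y ∈ U \ K, V =ᶠ[𝓝 y] h ∨ ∀ᶠ z in 𝓝 y, V z < h z)
    (hne : ∃ y ∈ U, V y = h y) : EqOn V h U := by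
  have hgVh : ∀ y ∈ U \ K, V y ∈ Icc (g y) (h y) := fun y hy =>
    ⟨hgV y hy, (hloc y hy).elim (·.eq_of_nhds.le) (·.self_of_nhds.le)⟩
  have hclosed := closure_setOf_eq_inter_subset hU hV.1 hh.continuousOn
    (hV.le_of_mem_Icc_off_null hU hh hK hg hgVh)
  obtain ⟨y, hyU, hy⟩ := hne
  exact fun x hx => (hUc.subset_of_closure_inter_subset
    (hV.isOpen_setOf_eq hU hh hK hg hgVh hloc hclosed) ⟨y, hyU, hyU, hy⟩ hclosed hx).2

end Rigidity

open InnerProductSpace in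
theorem SubharmonicOn.exists_eqOn_of_locally_eq {ι : Type*} [Fintype ι] {U K : Set ℂ}
    {V : ℂ → ℝ} {H : ι → ℂ → ℝ} (hU : IsOpen U) (hUc : IsPreconnected U) (hUne : U.Nonempty)
    (hV : SubharmonicOn V U) (hH : ∀ i, HarmonicOnNhd (H i) U)
    (hHne : ∀ y ∈ U, ∀ i j, i ≠ j → H i y ≠ H j y) (hK : volume K = 0)
    (hloc : ∀ y ∈ U \ K, ∃ i, V =ᶠ[𝓝 y] H i) : ∃ j, EqOn V (H j) U := by
  classical
  obtain ⟨w, hw⟩ := hUne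
  set I := Finset.univ.filter fun i => ∃ y ∈ U, V =ᶠ[𝓝 y] H i
  have hmemI : ∀ y ∈ U, ∀ i, V =ᶠ[𝓝 y] H i → i ∈ I := fun y hy i hi =>
    Finset.mem_filter.2 ⟨Finset.mem_univ i, y, hy, hi⟩
  have hIne : I.Nonempty := by
    obtain ⟨y, hy⟩ := nonempty_of_measure_ne_zero
      (by rw [measure_sdiff_null hK]; exact hU.measure_ne_zero volume ⟨w, hw⟩)
    obtain ⟨i, hi⟩ := hloc y hy
    exact ⟨i, hmemI y hy.1 i hi⟩
  -- Distinct pieces never cross on the preconnected `U`, so the piece largest at `w` is largest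
  -- everywhere.
  obtain ⟨j, hjI, hjmax⟩ := I.exists_max_image (fun i => H i w) hIne
  have hlt : ∀ i ∈ I, i ≠ j → ∀ y ∈ U, H i y < H j y := fun i hi hij =>
    hUc.forall_lt_of_forall_ne (hH i).continuousOn (hH j).continuousOn
      (fun y hy => hHne y hy i j hij) hw ((hjmax i hi).lt_of_ne (hHne w hw i j hij))
  obtain ⟨y₀, hy₀, hVy₀⟩ := (Finset.mem_filter.1 hjI).2
  refine ⟨j, hV.eqOn_of_locally_eq_or_lt hU hUc (hH j) hK
    (g := fun z => -∑ i, |H i z|)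
    (continuousOn_finsetSum _ fun i _ => (hH i).continuousOn.abs).neg ?_ ?_
    ⟨y₀, hy₀, hVy₀.eq_of_nhds⟩⟩
  · intro y hy
    obtain ⟨i, hi⟩ := hloc y hy
    rw [hi.eq_of_nhds, neg_le]
    exact (neg_le_abs (H i y)).trans
      (Finset.single_le_sum (fun i _ => abs_nonneg (H i y)) (Finset.mem_univ i))
  · intro y hy
    obtain ⟨i, hi⟩ := hloc y hy
    rcases eq_or_ne i j with rfl | hij
    · exact Or.inl hi
    · refine Or.inr ?_
      filter_upwards [hi, hU.mem_nhds hy.1] with z hz hzU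
      rw [hz]
      exact hlt i (hmemI y hy.1 i hi) hij z hzU

theorem eq_single_harmonic_on_components_general (Ω K : Set ℂ) (hΩ : IsOpen Ω)
    (V : ℂ → ℝ) (hV : SubharmonicOn V Ω)
    (k : ℕ) (H : Fin k → ℂ → ℝ) (hH : ∀ i, HarmonicOn (H i) Ω)
    (hKcl : IsClosed K) (hKnull : volume K = 0)
    (hKsupp : ∀ z ∈ Ω, (z ∈ K ↔ ¬ ∃ ε > 0, ball z ε ⊆ Ω ∧ HarmonicOn V (ball z ε)))
    (hpw : ∀ z ∈ Ω \ K, ∃ j, ∀ w ∈ connectedComponentIn (Ω \ K) z, V w = H j w)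
    (Γ : Set ℂ) (hΓ : Γ = {z | ∃ i j, i ≠ j ∧ H i z = H j z}) :
    ∀ z ∈ Ω \ Γ, ∃ i, ∀ w ∈ connectedComponentIn (Ω \ Γ) z, V w = H i w := by
  subst hΓ
  have hHΩ i := (hH i).harmonicOnNhd hΩ
  have hΓopen := isOpen_diff_setOf_exists_eq hΩ fun i => (hHΩ i).continuousOn
  have hloc : ∀ y ∈ Ω \ K, ∃ i, V =ᶠ[𝓝 y] H i := fun y hy =>
    (hpw y hy).imp fun i hi => Filter.eventually_of_mem
      ((hΩ.sdiff hKcl).connectedComponentIn.mem_nhds (mem_connectedComponentIn hy)) hi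
  have hKΓ : ∀ w ∈ Ω \ {z | ∃ i j, i ≠ j ∧ H i z = H j z}, w ∉ K := by
    intro w hw hwK
    obtain ⟨R, hR, hRΓ⟩ := Metric.isOpen_iff.1 hΓopen w hw
    have hRΩ : ball w R ⊆ Ω := hRΓ.trans sdiff_subset
    obtain ⟨j, hj⟩ := (hV.mono hRΩ).exists_eqOn_of_locally_eq isOpen_ball
      (convex_ball w R).isPreconnected ⟨w, mem_ball_self hR⟩ (fun i => (hHΩ i).mono hRΩ)
      (fun y hy i j hij hEq => (hRΓ hy).2 ⟨i, j, hij, hEq⟩) hKnull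
      (fun y hy => hloc y ⟨hRΩ hy.1, hy.2⟩)
    exact (hKsupp w hw.1).1 hwK ⟨R, hR, hRΩ, (hH j).congr_of_eqOn hRΩ hj⟩
  intro z hz
  obtain ⟨j, hj⟩ := hpw z ⟨hz.1, hKΓ z hz⟩
  refine ⟨j, fun w hw => hj w ?_⟩
  refine isPreconnected_connectedComponentIn.subset_connectedComponentIn
    (mem_connectedComponentIn hz) (fun u hu => ?_) hw
  exact ⟨(connectedComponentIn_subset _ _ hu).1, hKΓ u (connectedComponentIn_subset _ _ hu)⟩

/-- Lemma 2.1: if `V` is piecewise harmonic w.r.t. `H₁, …, H_k` relative to the null set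
`K = supp Δ V`, then on each connected component of `Ω \ Γ`, where
`Γ = ⋃_{i≠j} {H i = H j}`, the function `V` equals a single `H i`. -/
theorem eq_single_harmonic_on_components (Ω K : Set ℂ) (hΩ : IsOpen Ω) (hconn : IsConnected Ω)
    (V : ℂ → ℝ) (hV : SubharmonicOn V Ω)
    (k : ℕ) (H : Fin k → ℂ → ℝ) (hH : ∀ i, HarmonicOn (H i) Ω)
    (hdist : ∀ i j, i ≠ j → ∃ z ∈ Ω, H i z ≠ H j z)
    (hKcl : IsClosed K) (hKnull : volume K = 0)
    (hKsupp : ∀ z ∈ Ω, (z ∈ K ↔ ¬ ∃ ε > 0, ball z ε ⊆ Ω ∧ HarmonicOn V (ball z ε)))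
    (hpw : ∀ z ∈ Ω \ K, ∃ j, ∀ w ∈ connectedComponentIn (Ω \ K) z, V w = H j w)
    (Γ : Set ℂ) (hΓ : Γ = {z | ∃ i j, i ≠ j ∧ H i z = H j z}) :
    ∀ z ∈ Ω \ Γ, ∃ i, ∀ w ∈ connectedComponentIn (Ω \ Γ) z, V w = H i w :=
  eq_single_harmonic_on_components_general Ω K hΩ V hV k H hH hKcl hKnull hKsupp hpw Γ hΓ
end

section
/- Let h ∈ L¹_loc(Ω) with Re(h) ≥ 0 on a measurable set W ⊆ Ω and {Re(h) = 0} ∩ W a Lebesgue null set, and let D be a disk relatively compact in Ω. Then lim_{ε→0⁺} (1/Log(1/ε)) ∬_{D ∩ W} |Log|ε + h(z)|| dxdy = 0. -/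
/-!
Since `Re h ≥ 0`, we have `ε ≤ ‖ε + h‖`, hence `|log ‖ε + h‖| ≤ log (1/ε) + ‖h‖` for `ε ≤ 1`, and
after dividing by `log (1/ε) ≥ 1` the integrand is dominated by `1 + ‖h‖`, which is integrable on
the disk. Almost everywhere on `W` we have `Re h > 0`, so `h ≠ 0` and `log ‖ε + h‖` stays bounded
as `ε → 0⁺`; dominated convergence concludes.
-/

open MeasureTheory Metric Filter Topology

lemma one_le_log_one_div {ε : ℝ} (hε : 0 < ε) (hεe : ε ≤ Real.exp (-1)) :
    1 ≤ Real.log (1 / ε) := by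
  rw [one_div, Real.log_inv, le_neg]
  simpa using Real.log_le_log hε hεe

lemma abs_log_norm_ofReal_add_le {ε : ℝ} (hε : 0 < ε) (hε1 : ε ≤ 1) {w : ℂ}
    (hw : 0 ≤ w.re) : |Real.log ‖(ε : ℂ) + w‖| ≤ Real.log (1 / ε) + ‖w‖ := by
  have hlow : ε ≤ ‖(ε : ℂ) + w‖ := by
    simpa using (Complex.re_le_norm ((ε : ℂ) + w)).trans' (by simpa using hw)
  have hpos : 0 < ‖(ε : ℂ) + w‖ := hε.trans_le hlow
  rcases le_total ‖(ε : ℂ) + w‖ 1 with hle | hge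
  · rw [abs_of_nonpos (Real.log_nonpos hpos.le hle), one_div, Real.log_inv]
    linarith [Real.log_le_log hε hlow, norm_nonneg w]
  · have hup : ‖(ε : ℂ) + w‖ ≤ ε + ‖w‖ := by
      simpa [abs_of_pos hε] using norm_add_le (ε : ℂ) w
    rw [abs_of_nonneg (Real.log_nonneg hge)]
    linarith [Real.log_le_sub_one_of_pos hpos, Real.log_nonneg (one_le_one_div hε hε1)]

lemma one_div_log_one_div_mul_abs_log_norm_le {ε : ℝ} (hε : 0 < ε)
    (hεe : ε ≤ Real.exp (-1)) {w : ℂ} (hw : 0 ≤ w.re) :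
    1 / Real.log (1 / ε) * |Real.log ‖(ε : ℂ) + w‖| ≤ 1 + ‖w‖ := by
  have hL := one_le_log_one_div hε hεe
  have hL0 : 0 < Real.log (1 / ε) := zero_lt_one.trans_le hL
  have hε1 : ε ≤ 1 := hεe.trans (Real.exp_le_one_iff.mpr (by norm_num))
  calc 1 / Real.log (1 / ε) * |Real.log ‖(ε : ℂ) + w‖|
      ≤ 1 / Real.log (1 / ε) * (Real.log (1 / ε) + ‖w‖) := by
        gcongr; exact abs_log_norm_ofReal_add_le hε hε1 hw
    _ = 1 + ‖w‖ / Real.log (1 / ε) := by field_simp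
    _ ≤ 1 + ‖w‖ := by gcongr; exact div_le_self (norm_nonneg w) hL

lemma tendsto_one_div_log_one_div_nhdsGT_zero :
    Tendsto (fun ε : ℝ => 1 / Real.log (1 / ε)) (𝓝[>] 0) (𝓝 0) := by
  have : Tendsto (fun ε : ℝ => Real.log ε⁻¹) (𝓝[>] 0) atTop :=
    Real.tendsto_log_atTop.comp tendsto_inv_nhdsGT_zero
  simpa [one_div, Pi.inv_def] using this.inv_tendsto_atTop

lemma tendsto_one_div_log_one_div_mul_abs_log_norm_add {w : ℂ} (hw : w ≠ 0) :
    Tendsto (fun ε : ℝ => 1 / Real.log (1 / ε) * |Real.log ‖(ε : ℂ) + w‖|)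
      (𝓝[>] 0) (𝓝 0) := by
  have hlog : Tendsto (fun ε : ℝ => |Real.log ‖(ε : ℂ) + w‖|) (𝓝[>] 0)
      (𝓝 |Real.log ‖w‖|) := by
    have : Continuous fun ε : ℝ => (ε : ℂ) + w := by fun_prop
    simpa using (((this.tendsto 0).norm.log (by simpa using hw)).abs).mono_left
      nhdsWithin_le_nhds
  simpa using tendsto_one_div_log_one_div_nhdsGT_zero.mul hlog

theorem tendsto_one_div_log_one_div_mul_integral_abs_log_norm_add {α : Type*}
    [MeasurableSpace α] {μ : Measure α} [IsFiniteMeasure μ] {h : α → ℂ}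
    (hint : Integrable h μ) (hpos : ∀ᵐ x ∂μ, 0 < (h x).re) :
    Tendsto (fun ε : ℝ => 1 / Real.log (1 / ε) * ∫ x, |Real.log ‖(ε : ℂ) + h x‖| ∂μ)
      (𝓝[>] 0) (𝓝 0) := by
  have hdom := tendsto_integral_filter_of_dominated_convergence (μ := μ) (l := 𝓝[>] 0)
    (F := fun ε x => 1 / Real.log (1 / ε) * |Real.log ‖(ε : ℂ) + h x‖|) (f := fun _ => 0)
    (fun x => 1 + ‖h x‖) ?_ ?_ ((integrable_const 1).add hint.norm) ?_
  · simpa only [integral_const_mul, integral_zero] using hdom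
  · exact Eventually.of_forall fun ε => (by fun_prop : Measurable fun w : ℂ =>
      1 / Real.log (1 / ε) * |Real.log ‖(ε : ℂ) + w‖|).comp_aemeasurable
        hint.aemeasurable |>.aestronglyMeasurable
  · filter_upwards [Ioc_mem_nhdsGT (Real.exp_pos (-1))] with ε hε
    filter_upwards [hpos] with x hx
    have hL : 0 ≤ Real.log (1 / ε) := zero_le_one.trans (one_le_log_one_div hε.1 hε.2)
    rw [Real.norm_eq_abs, abs_of_nonneg (by positivity)]
    exact one_div_log_one_div_mul_abs_log_norm_le hε.1 hε.2 hx.le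
  · filter_upwards [hpos] with x hx
    exact tendsto_one_div_log_one_div_mul_abs_log_norm_add fun h0 => by simp [h0] at hx

theorem log_integral_tendsto_zero_general (Ω W : Set ℂ)
    (hW : MeasurableSet W)
    (h : ℂ → ℂ) (hloc : LocallyIntegrableOn h Ω)
    (hre : ∀ z ∈ W, 0 ≤ (h z).re)
    (hnull : volume {z ∈ W | (h z).re = 0} = 0)
    (z₀ : ℂ) (δ : ℝ) (hcl : closedBall z₀ δ ⊆ Ω) :
    Tendsto (fun ε : ℝ =>
        (1 / Real.log (1 / ε)) *
          ∫ z in ball z₀ δ ∩ W, |Real.log ‖(ε : ℂ) + h z‖|)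
      (nhdsWithin 0 (Set.Ioi 0)) (nhds 0) := by
  have hS : MeasurableSet (ball z₀ δ ∩ W) := measurableSet_ball.inter hW
  have hSsub : ball z₀ δ ∩ W ⊆ closedBall z₀ δ :=
    Set.inter_subset_left.trans ball_subset_closedBall
  have : IsFiniteMeasure (volume.restrict (ball z₀ δ ∩ W)) :=
    isFiniteMeasure_restrict.2 ((measure_mono hSsub).trans_lt measure_closedBall_lt_top).ne
  refine tendsto_one_div_log_one_div_mul_integral_abs_log_norm_add
    ((hloc.integrableOn_compact_subset hcl (isCompact_closedBall z₀ δ)).mono_set hSsub) ?_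
  rw [ae_restrict_iff' hS]
  filter_upwards [measure_eq_zero_iff_ae_notMem.1 hnull] with z hz hzS
  exact (hre z hzS.2).lt_of_ne fun h0 => hz ⟨hzS.2, h0.symm⟩

/-- (6) in the paper: for locally integrable `h` with `Re h ≥ 0` on `W` and
`{Re h = 0} ∩ W` a null set, the integral of `|log|ε + h||` over `D ∩ W`, divided by
`log(1/ε)`, tends to `0` as `ε → 0⁺`. -/
theorem log_integral_tendsto_zero (Ω W : Set ℂ) (hΩ : IsOpen Ω)
    (hW : MeasurableSet W) (hWΩ : W ⊆ Ω)
    (h : ℂ → ℂ) (hloc : LocallyIntegrableOn h Ω)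
    (hre : ∀ z ∈ W, 0 ≤ (h z).re)
    (hnull : volume {z ∈ W | (h z).re = 0} = 0)
    (z₀ : ℂ) (δ : ℝ) (hδ : 0 < δ) (hcl : closedBall z₀ δ ⊆ Ω) :
    Tendsto (fun ε : ℝ =>
        (1 / Real.log (1 / ε)) *
          ∫ z in ball z₀ δ ∩ W, |Real.log ‖(ε : ℂ) + h z‖|)
      (nhdsWithin 0 (Set.Ioi 0)) (nhds 0) :=
  log_integral_tendsto_zero_general Ω W hW h hloc hre hnull z₀ δ hcl
end

section
/- Let H be a nonconstant harmonic function on a disk D centered at 0 in ℂ with H(0) = 0, and write H = Re(g) with g ∈ 𝒪(D), g vanishing to order m ≥ 1 at 0. Then there is a conformal map ρ from a disk in the ζ-plane onto a neighborhood of 0 with g(ρ(ζ)) = ζ^m, and consequently, after shrinking D, the zero set {H = 0} is a union of m smooth real-analytic curves through the origin, and D \ {H = 0} has exactly 2m connected components, each a real-analytic sector with opening angle π/m at 0. -/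
/-!
Writing `g = z ^ m * h` with `h 0 ≠ 0`, a holomorphic `m`-th root of `h` gives `g = φ ^ m` with
`φ 0 = 0` and `φ' 0 ≠ 0`, so the local inverse `ρ` of `φ` satisfies `g (ρ ζ) = ζ ^ m`. The zero
set of `H = Re g` is therefore the `ρ`-image of the `m` lines `Re ζ ^ m = 0`, whose complement
consists of `2m` open sectors of opening `π / m`. Each sector meets `φ (ball 0 δ)` in a connected
set because `φ` is starlike near `0`: `Re (conj z * φ z / φ' z) ≥ 0` makes `‖ρ‖` increase along
rays, so `φ (ball 0 δ)` is star-shaped about `0`.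
-/

open MeasureTheory Metric

open Complex Function Set Filter Topology
open scoped Real ComplexConjugate

section Sector

/-- The open sector of opening angle `π / m` bisected by the ray through `exp (k π / m * I)`. -/
def sector (m : ℕ) (k : ℤ) : Set ℂ :=
  {ζ | ‖ζ‖ * Real.cos (π / (2 * m)) < (exp ((-k * π / m : ℝ) * I) * ζ).re}

variable {m : ℕ} {k : ℤ}

theorem isOpen_sector : IsOpen (sector m k) :=
  isOpen_lt (continuous_norm.mul continuous_const) (continuous_re.comp (continuous_const_mul _))

theorem Real.cos_pi_div_two_mul_nonneg (m : ℕ) : 0 ≤ Real.cos (π / (2 * m)) := by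
  rcases Nat.eq_zero_or_pos m with rfl | hm
  · simp
  apply Real.cos_nonneg_of_neg_pi_div_two_le_of_le
  · linarith [Real.pi_pos, show 0 ≤ π / (2 * m) by positivity]
  · exact div_le_div_of_nonneg_left Real.pi_pos.le two_pos (by norm_cast; omega)

theorem convex_sector : Convex ℝ (sector m k) := by
  have hconv : ConvexOn ℝ univ
      (fun ζ : ℂ => Real.cos (π / (2 * m)) • ‖ζ‖ - (exp ((-k * π / m : ℝ) * I) * ζ).re) :=
    ((convexOn_norm convex_univ).smul (Real.cos_pi_div_two_mul_nonneg m)).sub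
      ((reLm.comp (LinearMap.mulLeft ℝ (exp ((-k * π / m : ℝ) * I)))).concaveOn convex_univ)
  simpa [sector, mul_comm] using hconv.convex_lt 0

theorem smul_mem_sector {ζ : ℂ} (hζ : ζ ∈ sector m k) {t : ℝ} (ht : 0 < t) :
    t • ζ ∈ sector m k := by
  simp only [sector, mem_ofPred_eq, real_smul, norm_mul, norm_real, Real.norm_of_nonneg ht.le,
    mul_left_comm _ (t : ℂ), re_ofReal_mul, mul_assoc] at hζ ⊢
  exact mul_lt_mul_of_pos_left hζ ht

theorem sector_add_two_mul_mul (hm : m ≠ 0) (n : ℤ) : sector m (k + 2 * m * n) = sector m k := by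
  have hexp : exp ((-((k + 2 * m * n : ℤ) : ℝ) * π / m : ℝ) * I) = exp ((-k * π / m : ℝ) * I) := by
    rw [show ((-((k + 2 * m * n : ℤ) : ℝ) * π / m : ℝ) : ℂ) * I
        = (-k * π / m : ℝ) * I - n * (2 * π * I) by push_cast; field_simp; ring,
      exp_sub, exp_int_mul_two_pi_mul_I, div_one]
  simp only [sector, hexp]

theorem Real.cos_lt_cos_iff_abs_lt {a y : ℝ} (ha : 0 ≤ a) (haπ : a ≤ π) (hy : |y| ≤ π) :
    Real.cos a < Real.cos y ↔ |y| < a := by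
  rw [← Real.cos_abs y]
  exact Real.strictAntiOn_cos.lt_iff_gt ⟨ha, haπ⟩ ⟨abs_nonneg y, hy⟩

theorem mem_sector_iff (hm : 0 < m) {ζ : ℂ} :
    ζ ∈ sector m k ↔
      ζ ≠ 0 ∧ ∃ x : ℝ, |x - k| < 1 / 2 ∧ ζ = ‖ζ‖ * exp ((π * x / m : ℝ) * I) := by
  have hmR : (0 : ℝ) < m := by exact_mod_cast hm
  have hβ : 0 ≤ π / (2 * m) := by positivity
  have hβπ : π / (2 * m) ≤ π := div_le_self Real.pi_pos.le (by norm_cast; omega)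
  have hangle : ∀ y : ℝ, |y| < π / (2 * m) ↔ |k + m * y / π - k| < 1 / 2 := fun y => by
    rw [add_sub_cancel_left, abs_div, abs_mul, abs_of_pos hmR, abs_of_pos Real.pi_pos,
      div_lt_iff₀ Real.pi_pos, ← lt_div_iff₀' hmR]
    field_simp
  have hθ : ∀ y : ℝ, (π * (k + m * y / π) / m : ℝ) = k * π / m + y := fun y => by
    field_simp
  have hrot : ∀ y : ℝ, exp ((-k * π / m : ℝ) * I) * exp ((k * π / m + y : ℝ) * I) = exp (y * I) :=
    fun y => by rw [← exp_add]; congr 1; push_cast; ring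
  constructor
  · intro hζ
    have hζ0 : ζ ≠ 0 := by rintro rfl; simp [sector] at hζ
    set w := exp ((-k * π / m : ℝ) * I) * ζ with hw
    have hnw : ‖w‖ = ‖ζ‖ := by rw [hw, norm_mul, norm_exp_ofReal_mul_I, one_mul]
    have hw0 : w ≠ 0 := mul_ne_zero (exp_ne_zero _) hζ0
    have harg : |w.arg| < π / (2 * m) := by
      rw [← Real.cos_lt_cos_iff_abs_lt hβ hβπ (abs_arg_le_pi w), cos_arg hw0, hnw,
        lt_div_iff₀ (norm_pos_iff.2 hζ0), mul_comm]
      exact hζ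
    refine ⟨hζ0, k + m * w.arg / π, (hangle _).1 harg, ?_⟩
    rw [hθ]
    calc ζ = exp ((k * π / m : ℝ) * I) * w := by
          rw [hw, ← mul_assoc, ← exp_add, ← add_mul, ← ofReal_add,
            show (k * π / m + -k * π / m : ℝ) = 0 by ring, ofReal_zero, zero_mul, exp_zero, one_mul]
      _ = exp ((k * π / m : ℝ) * I) * (‖w‖ * exp (w.arg * I)) := by rw [norm_mul_exp_arg_mul_I]
      _ = ‖ζ‖ * exp ((k * π / m + w.arg : ℝ) * I) := by
          rw [hnw, ofReal_add, add_mul, exp_add]; ring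
  · rintro ⟨hζ0, x, hx, hζx⟩
    have hpos : 0 < ‖ζ‖ := norm_pos_iff.2 hζ0
    set y := π * x / m - k * π / m
    have hy : |y| < π / (2 * m) := by
      rw [hangle, show (k + m * y / π : ℝ) = x by simp only [y]; field_simp; ring]
      exact hx
    have hx' : (π * x / m : ℝ) = k * π / m + y := by ring
    rw [sector, mem_ofPred_eq, hζx, hx', mul_left_comm, hrot, re_ofReal_mul,
      exp_ofReal_mul_I_re, norm_mul, norm_exp_ofReal_mul_I, norm_real, Real.norm_of_nonneg hpos.le,
      mul_one]
    exact mul_lt_mul_of_pos_left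
      ((Real.cos_lt_cos_iff_abs_lt hβ hβπ (hy.le.trans hβπ)).2 hy) hpos

theorem sector_nonempty (hm : 0 < m) : (sector m k).Nonempty :=
  ⟨exp ((π * k / m : ℝ) * I), (mem_sector_iff hm).2
    ⟨exp_ne_zero _, k, by simp, by rw [norm_exp_ofReal_mul_I, ofReal_one, one_mul]⟩⟩

theorem Real.cos_pi_mul_ne_zero_iff {x : ℝ} : Real.cos (π * x) ≠ 0 ↔ ∃ k : ℤ, |x - k| < 1 / 2 := by
  rw [Ne, Real.cos_eq_zero_iff]
  constructor
  · intro h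
    refine ⟨round x, (abs_sub_round x).lt_of_ne fun heq => h ?_⟩
    rcases abs_eq (by norm_num : (0 : ℝ) ≤ 1 / 2) |>.1 heq with heq | heq
    · exact ⟨round x, by linear_combination π * heq⟩
    · exact ⟨round x - 1, by push_cast; linear_combination π * heq⟩
  · rintro ⟨k, hk⟩ ⟨j, hj⟩
    have hx : x = j + 1 / 2 := by
      apply mul_left_cancel₀ Real.pi_ne_zero; linear_combination hj
    have hlo : (-1 : ℝ) < j - k := by linarith [(abs_lt.1 hk).1]
    have hhi : (j - k : ℝ) < 0 := by linarith [(abs_lt.1 hk).2]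
    have : (-1 : ℤ) < j - k ∧ j - k < 0 := ⟨by exact_mod_cast hlo, by exact_mod_cast hhi⟩
    omega

theorem re_ofReal_mul_exp_pow (r θ : ℝ) (m : ℕ) :
    (((r : ℂ) * exp (θ * I)) ^ m).re = r ^ m * Real.cos (m * θ) := by
  rw [mul_pow, ← exp_nat_mul, ← mul_assoc, ← ofReal_pow, re_ofReal_mul,
    show (m : ℂ) * θ = ((m * θ : ℝ) : ℂ) by push_cast; ring, exp_ofReal_mul_I_re]

theorem re_pow_ne_zero_of_mem_sector (hm : 0 < m) {ζ : ℂ} (hζ : ζ ∈ sector m k) :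
    (ζ ^ m).re ≠ 0 := by
  obtain ⟨hζ0, x, hx, hζx⟩ := (mem_sector_iff hm).1 hζ
  rw [hζx, re_ofReal_mul_exp_pow, mul_div_cancel₀ _ (by positivity : (m : ℝ) ≠ 0)]
  exact mul_ne_zero (pow_ne_zero _ (norm_ne_zero_iff.2 hζ0)) (Real.cos_pi_mul_ne_zero_iff.2 ⟨k, hx⟩)

theorem exists_mem_sector_of_re_pow_ne_zero (hm : 0 < m) {ζ : ℂ} (hζ : (ζ ^ m).re ≠ 0) :
    ∃ i : Fin (2 * m), ζ ∈ sector m i := by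
  have hmR : (m : ℝ) ≠ 0 := by positivity
  have hζ0 : ζ ≠ 0 := by rintro rfl; simp [zero_pow hm.ne'] at hζ
  have hθ : (π * (m * ζ.arg / π) / m : ℝ) = ζ.arg := by field_simp
  obtain ⟨k, hk⟩ : ∃ k : ℤ, |m * ζ.arg / π - k| < 1 / 2 := by
    rw [← Real.cos_pi_mul_ne_zero_iff, mul_div_cancel₀ _ Real.pi_ne_zero]
    rw [← norm_mul_exp_arg_mul_I ζ, re_ofReal_mul_exp_pow] at hζ
    exact right_ne_zero_of_mul hζ
  have hζk : ζ ∈ sector m k :=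
    (mem_sector_iff hm).2 ⟨hζ0, _, hk, by rw [hθ, norm_mul_exp_arg_mul_I]⟩
  have h2m : (0 : ℤ) < 2 * m := by positivity
  have hlt := Int.emod_lt_of_pos k h2m
  refine ⟨⟨(k % (2 * m)).toNat, by omega⟩, ?_⟩
  rwa [Fin.val_mk, Int.toNat_of_nonneg (Int.emod_nonneg _ h2m.ne'), Int.emod_def,
    ← sector_add_two_mul_mul hm.ne' (k / (2 * m)), sub_add_cancel]

theorem pairwise_disjoint_sector (hm : 0 < m) :
    Pairwise fun i j : Fin (2 * m) => Disjoint (sector m i) (sector m j) := by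
  intro i j hij
  rw [Set.disjoint_left]
  intro ζ hi hj
  obtain ⟨hζ0, x, hx, hζx⟩ := (mem_sector_iff hm).1 hi
  obtain ⟨-, y, hy, hζy⟩ := (mem_sector_iff hm).1 hj
  have hexp : exp ((π * x / m : ℝ) * I) = exp ((π * y / m : ℝ) * I) :=
    mul_left_cancel₀ (ofReal_ne_zero.2 (norm_ne_zero_iff.2 hζ0)) (hζx.symm.trans hζy)
  obtain ⟨n, hn⟩ := exp_eq_exp_iff_exists_int.1 hexp
  have hxy : x = y + 2 * m * n := by
    have hre : π * x / m = π * y / m + n * (2 * π) := by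
      apply ofReal_injective
      apply mul_right_cancel₀ I_ne_zero
      push_cast at hn ⊢
      linear_combination hn
    field_simp at hre
    linarith
  have hint : |(2 * m * n - (i - j) : ℤ)| < 1 := by
    rw [Int.cast_natCast] at hx hy
    have : |((2 * m * n - (i - j) : ℤ) : ℝ)| < 1 := by
      push_cast
      rw [show (2 * m * n - ((i : ℝ) - j)) = (x - i) - (y - j) by rw [hxy]; ring]
      exact (abs_sub _ _).trans_lt (by linarith)
    exact_mod_cast this
  have hij' : (i : ℤ) = j + 2 * m * n := by rw [Int.abs_lt_one_iff] at hint; linarith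
  apply hij
  ext
  have h2m : (0 : ℤ) < 2 * m := by positivity
  have := congrArg (· % (2 * (m : ℤ))) hij'
  simp only [Int.add_mul_emod_self_left, Int.emod_eq_of_lt (Int.natCast_nonneg _)
    (by exact_mod_cast i.2 : (i : ℤ) < 2 * m), Int.emod_eq_of_lt (Int.natCast_nonneg _)
    (by exact_mod_cast j.2 : (j : ℤ) < 2 * m)] at this
  exact_mod_cast this

end Sector

section Components

variable {X ι : Type*} [TopologicalSpace X] {V : ι → Set X}

theorem connectedComponentIn_iUnion_eq (hVo : ∀ i, IsOpen (V i))
    (hVc : ∀ i, IsPreconnected (V i)) (hVd : Pairwise (Disjoint on V)) {i : ι} {z : X}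
    (hz : z ∈ V i) : connectedComponentIn (⋃ j, V j) z = V i := by
  refine subset_antisymm ?_ ((hVc i).subset_connectedComponentIn hz (subset_iUnion V i))
  refine isPreconnected_connectedComponentIn.subset_left_of_subset_union (hVo i)
    (isOpen_biUnion fun j (_ : j ≠ i) => hVo j) ?_ ?_
    ⟨z, mem_connectedComponentIn (mem_iUnion.2 ⟨i, hz⟩), hz⟩
  · exact disjoint_iUnion₂_right.2 fun j hji => hVd (Ne.symm hji)
  · intro y hy
    obtain ⟨j, hj⟩ := mem_iUnion.1 (connectedComponentIn_subset _ _ hy)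
    by_cases hji : j = i
    · exact Or.inl (hji ▸ hj)
    · exact Or.inr (mem_biUnion hji hj)

theorem card_connectedComponentIn_iUnion (hVo : ∀ i, IsOpen (V i))
    (hVc : ∀ i, IsConnected (V i)) (hVd : Pairwise (Disjoint on V)) :
    Nat.card {C : Set X // ∃ z ∈ ⋃ i, V i, C = connectedComponentIn (⋃ i, V i) z} =
      Nat.card ι := by
  have hcomp : ∀ i, ∀ z ∈ V i, connectedComponentIn (⋃ j, V j) z = V i := fun _ _ =>
    connectedComponentIn_iUnion_eq hVo (fun j => (hVc j).isPreconnected) hVd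
  have hrange : {C : Set X | ∃ z ∈ ⋃ i, V i, C = connectedComponentIn (⋃ i, V i) z} =
      range V := by
    ext C
    constructor
    · rintro ⟨z, hz, rfl⟩
      obtain ⟨i, hi⟩ := mem_iUnion.1 hz
      exact ⟨i, (hcomp i z hi).symm⟩
    · rintro ⟨i, rfl⟩
      obtain ⟨z, hz⟩ := (hVc i).nonempty
      exact ⟨z, mem_iUnion.2 ⟨i, hz⟩, (hcomp i z hz).symm⟩
  have hinj : Injective V := fun i j hij => by
    by_contra hne
    obtain ⟨z, hz⟩ := (hVc i).nonempty
    exact (hVd hne).le_bot ⟨hz, hij ▸ hz⟩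
  rw [← Nat.card_range_of_injective hinj]
  exact Nat.card_congr (Equiv.setCongr hrange)

end Components

section StarConvex

variable {E : Type*} [NormedAddCommGroup E] [NormedSpace ℝ E]

theorem isConnected_inter_of_starConvex {W S : Set E} (hWo : IsOpen W) (hW : StarConvex ℝ 0 W)
    (hW0 : (0 : E) ∈ W) (hS : Convex ℝ S) (hSsmul : ∀ x ∈ S, ∀ t : ℝ, 0 < t → t • x ∈ S)
    (hSne : S.Nonempty) : IsConnected (W ∩ S) := by
  obtain ⟨r, hr, hrW⟩ := Metric.isOpen_iff.1 hWo 0 hW0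
  have hshrink : ∀ x ∈ S, ∃ t : ℝ, 0 < t ∧ t ≤ 1 ∧ t • x ∈ ball 0 r ∩ S := by
    intro x hx
    refine ⟨r / (2 * (‖x‖ + r)), by positivity, ?_, ?_, hSsmul x hx _ (by positivity)⟩
    · rw [div_le_one (by positivity)]; linarith [norm_nonneg x]
    · rw [mem_ball_zero_iff, norm_smul, Real.norm_of_nonneg (by positivity), div_mul_eq_mul_div,
        div_lt_iff₀ (by positivity)]
      nlinarith [norm_nonneg x]
  -- every `x ∈ W ∩ S` is joined radially to the convex core `ball 0 r ∩ S`
  obtain ⟨p, hp⟩ := hSne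
  obtain ⟨s, hs, -, hsp⟩ := hshrink p hp
  have hcore : ball (0 : E) r ∩ S ⊆ W ∩ S := inter_subset_inter_left S hrW
  refine ⟨⟨s • p, hcore hsp⟩, isPreconnected_of_forall (s • p) fun x hx => ?_⟩
  obtain ⟨t, ht, ht1, htx⟩ := hshrink x hx.2
  refine ⟨segment ℝ x (t • x) ∪ ball 0 r ∩ S, union_subset ?_ hcore, Or.inr hsp,
    Or.inl (left_mem_segment ℝ _ _),
    (convex_segment _ _).isPreconnected.union (t • x) (right_mem_segment ℝ _ _) htx
      ((convex_ball 0 r).inter hS).isPreconnected⟩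
  rintro _ ⟨a, b, ha, hb, hab, rfl⟩
  have hc : a • x + b • t • x = (a + b * t) • x := by rw [smul_smul, ← add_smul, mul_comm]
  have hc0 : 0 < a + b * t := by nlinarith
  have hc1 : a + b * t ≤ 1 := by nlinarith
  rw [hc]
  exact ⟨starConvex_zero_iff.1 hW hx.1 hc0.le hc1, hSsmul x hx.2 _ hc0⟩

theorem starConvex_ball_inter_preimage_ball {F : Type*} [SeminormedAddCommGroup F] {ρ : E → F}
    {ε δ : ℝ} (hρ : ∀ x ∈ ball (0 : E) ε, ∀ t : ℝ, 0 ≤ t → t ≤ 1 → ‖ρ (t • x)‖ ≤ ‖ρ x‖) :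
    StarConvex ℝ 0 (ball (0 : E) ε ∩ ρ ⁻¹' ball 0 δ) :=
  starConvex_zero_iff.2 fun x hx t ht0 ht1 =>
    ⟨starConvex_zero_iff.1 ((convex_ball 0 ε).starConvex (mem_ball_self (pos_of_mem_ball hx.1)))
      hx.1 ht0 ht1, mem_ball_zero_iff.2 ((hρ x hx.1 t ht0 ht1).trans_lt (mem_ball_zero_iff.1 hx.2))⟩

end StarConvex

section Conformal

theorem exists_analyticAt_pow_eq {h : ℂ → ℂ} {z₀ : ℂ} (hh : AnalyticAt ℂ h z₀) (hne : h z₀ ≠ 0)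
    {m : ℕ} (hm : m ≠ 0) : ∃ u : ℂ → ℂ, AnalyticAt ℂ u z₀ ∧ ∀ z, u z ^ m = h z := by
  -- dividing by `h z₀` keeps the base of the power near `1`, inside the slit plane
  refine ⟨fun z => h z₀ ^ (m⁻¹ : ℂ) * (h z / h z₀) ^ (m⁻¹ : ℂ),
    analyticAt_const.mul (hh.div_const.cpow analyticAt_const ?_), fun z => ?_⟩
  · rw [div_self hne]
    exact one_mem_slitPlane
  · dsimp only
    rw [mul_pow, cpow_nat_inv_pow _ hm, cpow_nat_inv_pow _ hm, mul_div_cancel₀ _ hne]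

theorem exists_analyticAt_eq_pow_of_eq_pow_mul {g h : ℂ → ℂ} {m : ℕ} (hm : m ≠ 0)
    (hh : AnalyticAt ℂ h 0) (hne : h 0 ≠ 0) (hg : ∀ᶠ z in 𝓝 0, g z = z ^ m * h z) :
    ∃ φ : ℂ → ℂ, AnalyticAt ℂ φ 0 ∧ φ 0 = 0 ∧ deriv φ 0 ≠ 0 ∧ ∀ᶠ z in 𝓝 0, g z = φ z ^ m := by
  obtain ⟨u, hu, hum⟩ := exists_analyticAt_pow_eq hh hne hm
  have hu0 : u 0 ≠ 0 := fun h0 => hne (by rw [← hum, h0, zero_pow hm])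
  refine ⟨fun z => z * u z, analyticAt_id.mul hu, zero_mul _, ?_, ?_⟩
  · have hderiv : HasDerivAt (fun z => z * u z) (1 * u 0 + 0 * deriv u 0) 0 :=
      (hasDerivAt_id' 0).mul hu.differentiableAt.hasDerivAt
    rwa [hderiv.deriv, one_mul, zero_mul, add_zero]
  · filter_upwards [hg] with z hz
    rw [hz, mul_pow, hum]

theorem AnalyticAt.eventually_re_conj_mul_div_deriv_nonneg {φ : ℂ → ℂ} (hφ : AnalyticAt ℂ φ 0)
    (hφ0 : φ 0 = 0) (hφ' : deriv φ 0 ≠ 0) :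
    ∀ᶠ z in 𝓝 0, 0 ≤ (conj z * φ z / deriv φ z).re := by
  have hslope : Tendsto (fun z => φ z / z) (𝓝[≠] 0) (𝓝 (deriv φ 0)) := by
    have hslope_eq : slope φ 0 = fun z => φ z / z := funext fun z => by
      rw [slope_def_field, hφ0, sub_zero, sub_zero]
    exact hslope_eq ▸ hasDerivAt_iff_tendsto_slope.1 hφ.differentiableAt.hasDerivAt
  have hquot : Tendsto (fun z => φ z / z / deriv φ z) (𝓝[≠] 0) (𝓝 1) := by
    have := hslope.div (hφ.deriv.continuousAt.tendsto.mono_left nhdsWithin_le_nhds) hφ'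
    rwa [div_self hφ'] at this
  have hre : ∀ᶠ z in 𝓝[≠] 0, 0 < (φ z / z / deriv φ z).re :=
    ((continuous_re.tendsto 1).comp hquot).eventually (lt_mem_nhds (by simp))
  filter_upwards [eventually_nhdsWithin_iff.1 hre] with z hz
  rcases eq_or_ne z 0 with rfl | hz0
  · simp
  · have hsplit : conj z * φ z / deriv φ z = (normSq z : ℂ) * (φ z / z / deriv φ z) := by
      rw [normSq_eq_conj_mul_self]
      field_simp
    rw [hsplit, re_ofReal_mul]
    exact mul_nonneg (normSq_nonneg z) (hz hz0).le

theorem AnalyticAt.exists_ball_localInverse {φ : ℂ → ℂ} (hφ : AnalyticAt ℂ φ 0) (hφ0 : φ 0 = 0)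
    (hφ' : deriv φ 0 ≠ 0) {U : Set ℂ} (hU : U ∈ 𝓝 0) :
    ∃ ε > 0, ∃ ρ : ℂ → ℂ, ρ 0 = 0 ∧ IsOpen (ρ '' ball 0 ε) ∧
      ∀ ζ ∈ ball 0 ε, ρ ζ ∈ U ∧ φ (ρ ζ) = ζ ∧ HasDerivAt ρ (deriv φ (ρ ζ))⁻¹ ζ := by
  set e := (hφ.hasStrictDerivAt.hasStrictFDerivAt_equiv hφ').toOpenPartialHomeomorph φ
  have he : ⇑e = φ := rfl
  have h0 : (0 : ℂ) ∈ e.source := HasStrictFDerivAt.mem_toOpenPartialHomeomorph_source _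
  set U' := U ∩ e.source ∩ {z | AnalyticAt ℂ φ z ∧ deriv φ z ≠ 0}
  have hU' : U' ∈ 𝓝 0 := inter_mem (inter_mem hU (e.open_source.mem_nhds h0))
    (hφ.eventually_analyticAt.and (hφ.deriv.continuousAt.eventually_ne hφ'))
  obtain ⟨ε, hε, hball⟩ : ∃ ε > 0, ball 0 ε ⊆ e '' U' := by
    simpa [he, hφ0] using Metric.mem_nhds_iff.1 (e.image_mem_nhds h0 hU')
  have hinv : ∀ ζ ∈ ball 0 ε, e.symm ζ ∈ U' ∧ φ (e.symm ζ) = ζ := by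
    intro ζ hζ
    obtain ⟨z, hz, rfl⟩ := hball hζ
    rw [e.left_inv hz.1.2]
    exact ⟨hz, rfl⟩
  refine ⟨ε, hε, e.symm, ?_, ?_, fun ζ hζ => ?_⟩
  · simpa [he, hφ0] using e.left_inv h0
  · refine e.symm.isOpen_image_of_subset_source isOpen_ball fun ζ hζ => ?_
    obtain ⟨z, hz, rfl⟩ := hball hζ
    exact e.map_source hz.1.2
  · obtain ⟨⟨⟨hzU, hzs⟩, hzan, hzd⟩, hφζ⟩ := hinv ζ hζ
    refine ⟨hzU, hφζ, ?_⟩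
    have := hzan.hasStrictDerivAt.to_local_left_inverse hzd (e.eventually_left_inverse hzs)
    rw [hφζ] at this
    exact this.hasDerivAt

theorem norm_apply_smul_le_of_re_conj_mul_deriv_nonneg {ρ ρ' : ℂ → ℂ} {S : Set ℂ}
    (hS : StarConvex ℝ 0 S) (hρ : ∀ ζ ∈ S, HasDerivAt ρ (ρ' ζ) ζ)
    (hpos : ∀ ζ ∈ S, 0 ≤ (conj (ρ ζ) * ρ' ζ * ζ).re) {ζ : ℂ} (hζ : ζ ∈ S) {t : ℝ}
    (ht0 : 0 ≤ t) (ht1 : t ≤ 1) : ‖ρ (t • ζ)‖ ≤ ‖ρ ζ‖ := by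
  have hmem : ∀ s ∈ Icc (0 : ℝ) 1, (s : ℂ) * ζ ∈ S := fun s hs => by
    simpa [real_smul] using starConvex_zero_iff.1 hS hζ hs.1 hs.2
  have hd : ∀ s ∈ Icc (0 : ℝ) 1, HasDerivAt (fun s : ℝ => ‖ρ (s * ζ)‖ ^ 2)
      (2 * inner ℝ (ρ (s * ζ)) (ρ' (s * ζ) * ζ)) s := fun s hs =>
    (((hρ _ (hmem s hs)).comp (s : ℂ) (hasDerivAt_mul_const ζ)).comp_ofReal).norm_sq
  have hmono : MonotoneOn (fun s : ℝ => ‖ρ (s * ζ)‖ ^ 2) (Icc 0 1) := by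
    refine monotoneOn_of_hasDerivWithinAt_nonneg (convex_Icc 0 1)
      (fun s hs => (hd s hs).continuousAt.continuousWithinAt)
      (fun s hs => (hd s (interior_subset hs)).hasDerivWithinAt) fun s hs => ?_
    rw [interior_Icc] at hs
    have hscaled := hpos _ (hmem s (Ioo_subset_Icc_self hs))
    rw [show conj (ρ (s * ζ)) * ρ' (s * ζ) * (s * ζ) =
      s * (ρ' (s * ζ) * ζ * conj (ρ (s * ζ))) by ring, re_ofReal_mul] at hscaled
    rw [Complex.inner]
    exact mul_nonneg zero_le_two (nonneg_of_mul_nonneg_right hscaled hs.1)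
  have := hmono ⟨ht0, ht1⟩ ⟨zero_le_one, le_rfl⟩ ht1
  simp only [ofReal_one, one_mul] at this
  rw [pow_le_pow_iff_left₀ (norm_nonneg _) (norm_nonneg _) two_ne_zero] at this
  rwa [real_smul]

theorem AnalyticAt.exists_localInverse_norm_smul_le {φ : ℂ → ℂ} (hφ : AnalyticAt ℂ φ 0)
    (hφ0 : φ 0 = 0) (hφ' : deriv φ 0 ≠ 0) {U : Set ℂ} (hU : U ∈ 𝓝 0) :
    ∃ ε > 0, ∃ ρ : ℂ → ℂ, ρ 0 = 0 ∧ IsOpen (ρ '' ball 0 ε) ∧ DifferentiableOn ℂ ρ (ball 0 ε) ∧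
      ContinuousOn φ (ρ '' ball 0 ε) ∧ (∀ ζ ∈ ball 0 ε, ρ ζ ∈ U ∧ φ (ρ ζ) = ζ) ∧
      ∀ ζ ∈ ball 0 ε, ∀ t : ℝ, 0 ≤ t → t ≤ 1 → ‖ρ (t • ζ)‖ ≤ ‖ρ ζ‖ := by
  obtain ⟨ε, hε, ρ, hρ0, hρ_open, hρ⟩ := hφ.exists_ball_localInverse hφ0 hφ'
    (inter_mem hU ((hφ.eventually_analyticAt.mono fun z hz => hz.continuousAt).and
      (hφ.eventually_re_conj_mul_div_deriv_nonneg hφ0 hφ')))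
  refine ⟨ε, hε, ρ, hρ0, hρ_open,
    fun ζ hζ => (hρ ζ hζ).2.2.differentiableAt.differentiableWithinAt, ?_,
    fun ζ hζ => ⟨(hρ ζ hζ).1.1, (hρ ζ hζ).2.1⟩, fun ζ hζ t ht0 ht1 =>
      norm_apply_smul_le_of_re_conj_mul_deriv_nonneg ((convex_ball 0 ε).starConvex
        (mem_ball_self hε)) (fun ξ hξ => (hρ ξ hξ).2.2) (fun ξ hξ => ?_) hζ ht0 ht1⟩
  · rintro _ ⟨ζ, hζ, rfl⟩
    exact (hρ ζ hζ).1.2.1.continuousWithinAt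
  · obtain ⟨⟨-, -, hstar⟩, hφξ, -⟩ := hρ ξ hξ
    convert hstar using 2
    rw [hφξ]
    ring

end Conformal

theorem card_connectedComponentIn_ball_diff {m : ℕ} (hm : 0 < m) {φ ρ : ℂ → ℂ} {ε δ : ℝ}
    {Z : Set ℂ} (hδ : 0 < δ) (hδε : ball 0 δ ⊆ ρ '' ball 0 ε)
    (hφρ : ∀ ζ ∈ ball 0 ε, φ (ρ ζ) = ζ) (hφ : ContinuousOn φ (ball 0 δ))
    (hρ : ContinuousOn ρ (ball 0 ε))
    (hρ_mono : ∀ ζ ∈ ball 0 ε, ∀ t : ℝ, 0 ≤ t → t ≤ 1 → ‖ρ (t • ζ)‖ ≤ ‖ρ ζ‖)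
    (hZ : ∀ z ∈ ball 0 δ, z ∈ Z ↔ (φ z ^ m).re = 0) :
    Nat.card {C : Set ℂ // ∃ z ∈ ball 0 δ \ Z, C = connectedComponentIn (ball 0 δ \ Z) z} =
      2 * m := by
  set W := ball 0 ε ∩ ρ ⁻¹' ball 0 δ
  have hWo : IsOpen W := hρ.isOpen_inter_preimage isOpen_ball isOpen_ball
  have hW : StarConvex ℝ 0 W := starConvex_ball_inter_preimage_ball hρ_mono
  have hW0 : (0 : ℂ) ∈ W := by
    obtain ⟨ζ, hζ, hρζ⟩ := hδε (mem_ball_self hδ)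
    simpa using starConvex_zero_iff.1 hW (show ζ ∈ W from ⟨hζ, by simp [hρζ, hδ]⟩) le_rfl
      zero_le_one
  set V : Fin (2 * m) → Set ℂ := fun i => ball 0 δ ∩ φ ⁻¹' sector m i
  have hV : ∀ i, V i = ρ '' (W ∩ sector m i) := fun i => by
    ext z
    constructor
    · rintro ⟨hzδ, hzS⟩
      obtain ⟨ζ, hζ, rfl⟩ := hδε hzδ
      exact ⟨ζ, ⟨⟨hζ, hzδ⟩, by rwa [mem_preimage, hφρ ζ hζ] at hzS⟩, rfl⟩
    · rintro ⟨ζ, ⟨⟨hζ, hζδ⟩, hζS⟩, rfl⟩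
      exact ⟨hζδ, by rwa [mem_preimage, hφρ ζ hζ]⟩
  have hB : ball 0 δ \ Z = ⋃ i, V i := by
    ext z
    rw [mem_iUnion]
    constructor
    · rintro ⟨hz, hzZ⟩
      obtain ⟨i, hi⟩ := exists_mem_sector_of_re_pow_ne_zero hm fun h => hzZ ((hZ z hz).2 h)
      exact ⟨i, hz, hi⟩
    · rintro ⟨i, hz, hi⟩
      exact ⟨hz, fun hzZ => re_pow_ne_zero_of_mem_sector hm hi ((hZ z hz).1 hzZ)⟩
  rw [hB, card_connectedComponentIn_iUnion, Nat.card_eq_fintype_card, Fintype.card_fin]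
  · exact fun i => hφ.isOpen_inter_preimage isOpen_ball isOpen_sector
  · intro i
    rw [hV]
    exact (isConnected_inter_of_starConvex hWo hW hW0 convex_sector
      (fun x hx t ht => smul_mem_sector hx ht) (sector_nonempty hm)).image ρ
      (hρ.mono (inter_subset_left.trans inter_subset_left))
  · exact fun i j hij =>
      ((pairwise_disjoint_sector hm hij).preimage φ).mono inter_subset_right inter_subset_right

theorem harmonic_zero_set_structure_general (R : ℝ) (hR : 0 < R)
    (H : ℂ → ℝ) (g h : ℂ → ℂ) (m : ℕ) (hm : 1 ≤ m)
    (hRe : ∀ z ∈ ball 0 R, H z = (g z).re)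
    -- g vanishes to order exactly m at the origin
    (hh : DifferentiableOn ℂ h (ball 0 R))
    (hfac : ∀ z ∈ ball 0 R, g z = z ^ m * h z) (hne : h 0 ≠ 0) :
    ∃ ε > 0, ∃ ρ : ℂ → ℂ,
      DifferentiableOn ℂ ρ (ball 0 ε) ∧ Set.InjOn ρ (ball 0 ε) ∧ ρ 0 = 0 ∧
      IsOpen (ρ '' ball 0 ε) ∧ ρ '' ball 0 ε ⊆ ball 0 R ∧
      (∀ ζ ∈ ball 0 ε, g (ρ ζ) = ζ ^ m) ∧
      {z ∈ ρ '' ball 0 ε | H z = 0} = ρ '' {ζ ∈ ball 0 ε | (ζ ^ m).re = 0} ∧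
      ∃ δ > 0, ball 0 δ ⊆ ρ '' ball 0 ε ∧
        Nat.card {C : Set ℂ // ∃ z ∈ ball 0 δ \ {w | H w = 0},
          C = connectedComponentIn (ball 0 δ \ {w | H w = 0}) z} = 2 * m := by
  obtain ⟨φ, hφ, hφ0, hφ', hgφ⟩ := exists_analyticAt_eq_pow_of_eq_pow_mul (by omega)
    (hh.analyticAt (ball_mem_nhds 0 hR)) hne (eventually_of_mem (ball_mem_nhds 0 hR) hfac)
  obtain ⟨ε, hε, ρ, hρ0, hρ_open, hρ_diff, hφ_cont, hρ, hρ_mono⟩ :=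
    hφ.exists_localInverse_norm_smul_le hφ0 hφ' (inter_mem (ball_mem_nhds 0 hR) hgφ)
  have hρU : ρ '' ball 0 ε ⊆ ball 0 R ∩ {z | g z = φ z ^ m} :=
    image_subset_iff.2 fun ζ hζ => (hρ ζ hζ).1
  have hgρ : ∀ ζ ∈ ball 0 ε, g (ρ ζ) = ζ ^ m := fun ζ hζ => by
    rw [(hρ ζ hζ).1.2, (hρ ζ hζ).2]
  have hHρ : ∀ ζ ∈ ball 0 ε, H (ρ ζ) = (ζ ^ m).re := fun ζ hζ => by
    rw [hRe _ (hρ ζ hζ).1.1, hgρ ζ hζ]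
  obtain ⟨δ, hδ, hδε⟩ := Metric.isOpen_iff.1 hρ_open 0 ⟨0, mem_ball_self hε, hρ0⟩
  refine ⟨ε, hε, ρ, hρ_diff, fun ζ hζ ξ hξ hρζξ => by rw [← (hρ ζ hζ).2, hρζξ, (hρ ξ hξ).2],
    hρ0, hρ_open, hρU.trans inter_subset_left, hgρ, ?_, δ, hδ, hδε,
    card_connectedComponentIn_ball_diff hm hδ hδε (fun ζ hζ => (hρ ζ hζ).2) (hφ_cont.mono hδε)
      hρ_diff.continuousOn hρ_mono fun z hz => ?_⟩
  · ext z
    constructor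
    · rintro ⟨⟨ζ, hζ, rfl⟩, hz⟩
      exact ⟨ζ, ⟨hζ, (hHρ ζ hζ).symm.trans hz⟩, rfl⟩
    · rintro ⟨ζ, ⟨hζ, hz⟩, rfl⟩
      exact ⟨⟨ζ, hζ, rfl⟩, (hHρ ζ hζ).trans hz⟩
  · obtain ⟨hzR, hgz⟩ := hρU (hδε hz)
    rw [mem_ofPred_eq, hRe z hzR, hgz]

/-- Local structure of the zero set of a harmonic function: there is a conformal map ρ with
g∘ρ(ζ) = ζ^m, the zero set of H = Re g is the ρ-image of the m lines {Re ζ^m = 0}, and on a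
small disk the complement of the zero set has exactly 2m connected components. -/
theorem harmonic_zero_set_structure (R : ℝ) (hR : 0 < R)
    (H : ℂ → ℝ) (g h : ℂ → ℂ) (m : ℕ) (hm : 1 ≤ m)
    (hH : HarmonicOn H (ball 0 R))
    (hg : DifferentiableOn ℂ g (ball 0 R))
    (hRe : ∀ z ∈ ball 0 R, H z = (g z).re) (hH0 : H 0 = 0)
    -- g vanishes to order exactly m at the origin
    (hh : DifferentiableOn ℂ h (ball 0 R))
    (hfac : ∀ z ∈ ball 0 R, g z = z ^ m * h z) (hne : h 0 ≠ 0) :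
    ∃ ε > 0, ∃ ρ : ℂ → ℂ,
      DifferentiableOn ℂ ρ (ball 0 ε) ∧ Set.InjOn ρ (ball 0 ε) ∧ ρ 0 = 0 ∧
      IsOpen (ρ '' ball 0 ε) ∧ ρ '' ball 0 ε ⊆ ball 0 R ∧
      (∀ ζ ∈ ball 0 ε, g (ρ ζ) = ζ ^ m) ∧
      {z ∈ ρ '' ball 0 ε | H z = 0} = ρ '' {ζ ∈ ball 0 ε | (ζ ^ m).re = 0} ∧
      ∃ δ > 0, ball 0 δ ⊆ ρ '' ball 0 ε ∧
        Nat.card {C : Set ℂ // ∃ z ∈ ball 0 δ \ {w | H w = 0},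
          C = connectedComponentIn (ball 0 δ \ {w | H w = 0}) z} = 2 * m :=
  harmonic_zero_set_structure_general R hR H g h m hm hRe hh hfac hne
end

section
/- Let μ be the probability measure on the interval [−4, 0] ⊆ ℝ ⊆ ℂ with density dμ(x) = (1/2π)·√(4+x)/√(−x) dx. Then ∫_{−4}^{0} dμ = 1, and its Cauchy transform μ̂(z) = ∫_{−4}^0 dμ(x)/(z − x) satisfies the algebraic equation μ̂(z)² + μ̂(z) = 1/z for all z ∈ ℂ \ [−4,0]. -/
/-!
Substituting `x = 2 cos θ - 2` turns `μ` into `(1 + cos θ) / π dθ` on `(0, π)`, which has mass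
`1`. Off the segment, write `z = r + r⁻¹ - 2` with `0 < |r| < 1` (Joukowski). Partial fractions
reduce `μ̂(z)` to `∫₀^π dθ / (r + r⁻¹ - 2 cos θ)`, which is half the integral over a full period,
`2π / (r⁻¹ - r)` by the Cauchy integral formula on the unit circle. Hence `μ̂(z) = r / (1 - r)`
and `μ̂² + μ̂ = r / (1 - r)² = 1 / z`.
-/

open MeasureTheory intervalIntegral
open Real Set Metric

section Substitution

variable {E : Type*} [NormedAddCommGroup E] [NormedSpace ℝ E]

theorem integral_Ioo_neg_one_one_eq_integral_sin_smul (g : ℝ → E) :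
    ∫ t in Ioo (-1) 1, g t = ∫ θ in Ioo 0 π, sin θ • g (cos θ) := by
  have himage : cos '' Ioo 0 π = Ioo (-1) 1 := cosPartialHomeomorph.image_source_eq_target
  rw [← himage, integral_image_eq_integral_abs_deriv_smul measurableSet_Ioo
      (fun θ _ => (hasDerivAt_cos θ).hasDerivWithinAt) cosPartialHomeomorph.injOn g]
  refine setIntegral_congr_fun measurableSet_Ioo fun θ hθ => ?_
  rw [abs_neg, abs_of_pos (sin_pos_of_pos_of_lt_pi hθ.1 hθ.2)]

theorem integral_comp_cos_zero_two_pi_eq_two_smul {f : ℝ → E}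
    (hf : Continuous fun θ => f (cos θ)) :
    ∫ θ in 0..2 * π, f (cos θ) = (2 : ℝ) • ∫ θ in 0..π, f (cos θ) := by
  have hreflect : ∫ θ in π..2 * π, f (cos θ) = ∫ θ in 0..π, f (cos θ) := by
    simpa [two_mul, cos_sub] using (integral_comp_sub_left (fun θ => f (cos θ)) (2 * π)
      (a := 0) (b := π)).symm
  rw [← integral_add_adjacent_intervals (hf.intervalIntegrable 0 π)
    (hf.intervalIntegrable π (2 * π)), hreflect, two_smul]

end Substitution

theorem exists_eq_add_inv (c : ℂ) : ∃ r : ℂ, r ≠ 0 ∧ c = r + r⁻¹ := by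
  obtain ⟨s, hs⟩ := IsAlgClosed.exists_pow_nat_eq (c ^ 2 - 4) two_pos
  have hprod : (c + s) / 2 * ((c - s) / 2) = 1 := by linear_combination -hs / 4
  refine ⟨(c + s) / 2, left_ne_zero_of_mul_eq_one hprod, ?_⟩
  rw [inv_eq_of_mul_eq_one_right hprod]
  ring

theorem exists_norm_le_one_eq_add_inv (c : ℂ) :
    ∃ r : ℂ, r ≠ 0 ∧ ‖r‖ ≤ 1 ∧ c = r + r⁻¹ := by
  obtain ⟨r, hr0, rfl⟩ := exists_eq_add_inv c
  rcases le_total ‖r‖ 1 with hr | hr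
  · exact ⟨r, hr0, hr, rfl⟩
  · exact ⟨r⁻¹, inv_ne_zero hr0, by simpa using inv_le_one_of_one_le₀ hr,
      by rw [inv_inv, add_comm]⟩

theorem add_inv_im_eq_zero_and_re_mem_Icc {r : ℂ} (hr : ‖r‖ = 1) :
    (r + r⁻¹).im = 0 ∧ (r + r⁻¹).re ∈ Icc (-2) 2 := by
  have hre := abs_le.1 (hr ▸ Complex.abs_re_le_norm r)
  rw [Complex.inv_eq_conj hr]
  simp only [Complex.add_im, Complex.conj_im, add_neg_cancel, Complex.add_re, Complex.conj_re]
  exact ⟨trivial, by linarith, by linarith⟩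

theorem exists_norm_lt_one_eq_add_inv {c : ℂ}
    (hc : c ∉ {w : ℂ | w.im = 0 ∧ -2 ≤ w.re ∧ w.re ≤ 2}) :
    ∃ r : ℂ, r ≠ 0 ∧ ‖r‖ < 1 ∧ c = r + r⁻¹ := by
  obtain ⟨r, hr0, hr, rfl⟩ := exists_norm_le_one_eq_add_inv c
  exact ⟨r, hr0, hr.lt_of_ne fun h => hc (add_inv_im_eq_zero_and_re_mem_Icc h), rfl⟩

theorem two_mul_cos_mul_circleMap (θ : ℝ) :
    2 * (cos θ : ℂ) * circleMap 0 1 θ = circleMap 0 1 θ ^ 2 + 1 := by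
  rw [Complex.ofReal_cos, Complex.two_cos]
  simp only [circleMap, Complex.ofReal_one, one_mul, zero_add]
  rw [add_mul, sq, neg_mul, Complex.exp_neg, inv_mul_cancel₀ (Complex.exp_ne_zero _)]

theorem circleMap_sub_mul_circleMap_sub {r : ℂ} (hr : r ≠ 0) (θ : ℝ) :
    (circleMap 0 1 θ - r) * (circleMap 0 1 θ - r⁻¹)
      = -circleMap 0 1 θ * (r + r⁻¹ - 2 * (cos θ : ℂ)) := by
  linear_combination mul_inv_cancel₀ hr - two_mul_cos_mul_circleMap θ

theorem add_inv_sub_two_mul_cos_ne_zero {r : ℂ} (hr0 : r ≠ 0) (hr : ‖r‖ ≠ 1) (θ : ℝ) :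
    r + r⁻¹ - 2 * (cos θ : ℂ) ≠ 0 := by
  intro h
  have hu : ‖circleMap 0 1 θ‖ = 1 := by simp
  have hroots := circleMap_sub_mul_circleMap_sub hr0 θ
  rw [h, mul_zero, mul_eq_zero, sub_eq_zero, sub_eq_zero] at hroots
  rcases hroots with hu_eq | hu_eq
  · exact hr (hu_eq ▸ hu)
  · exact hr (by simpa [hu] using (congrArg norm hu_eq).symm)

theorem integral_inv_add_inv_sub_two_mul_cos {r : ℂ} (hr0 : r ≠ 0) (hr : ‖r‖ < 1) :
    ∫ θ in 0..2 * π, (r + r⁻¹ - 2 * (cos θ : ℂ))⁻¹ = 2 * π / (r⁻¹ - r) := by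
  have hw : 1 < ‖r⁻¹‖ := by
    rw [norm_inv]; exact (one_lt_inv₀ (norm_pos_iff.2 hr0)).2 hr
  have hf : DiffContOnCl ℂ (fun z => Complex.I * (z - r⁻¹)⁻¹) (ball 0 1) := by
    refine DifferentiableOn.diffContOnCl fun z hz => ?_
    have : z - r⁻¹ ≠ 0 := by
      rw [closure_ball 0 one_ne_zero, mem_closedBall_zero_iff] at hz
      exact sub_ne_zero.2 fun h => (h ▸ hz).not_gt hw
    exact DifferentiableAt.differentiableWithinAt (by fun_prop (disch := exact this))
  have hintegrand (θ : ℝ) : (r + r⁻¹ - 2 * (cos θ : ℂ))⁻¹ = deriv (circleMap 0 1) θ •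
      ((circleMap 0 1 θ - r)⁻¹ • (Complex.I * (circleMap 0 1 θ - r⁻¹)⁻¹)) := by
    have hu : circleMap 0 1 θ ≠ 0 := by simp [circleMap]
    have hne := add_inv_sub_two_mul_cos_ne_zero hr0 hr.ne θ
    rw [deriv_circleMap, smul_eq_mul, smul_eq_mul]
    calc (r + r⁻¹ - 2 * (cos θ : ℂ))⁻¹
        = -circleMap 0 1 θ * (-circleMap 0 1 θ * (r + r⁻¹ - 2 * (cos θ : ℂ)))⁻¹ := by
          field_simp
      _ = _ := by
          rw [← circleMap_sub_mul_circleMap_sub hr0, mul_inv]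
          linear_combination (-circleMap 0 1 θ * (circleMap 0 1 θ - r)⁻¹ *
            (circleMap 0 1 θ - r⁻¹)⁻¹) * Complex.I_sq
  calc ∫ θ in 0..2 * π, (r + r⁻¹ - 2 * (cos θ : ℂ))⁻¹
      = ∮ z in C(0, 1), (z - r)⁻¹ • (Complex.I * (z - r⁻¹)⁻¹) :=
        integral_congr fun θ _ => hintegrand θ
    _ = (2 * π * Complex.I) • (Complex.I * (r - r⁻¹)⁻¹) :=
        hf.circleIntegral_sub_inv_smul (by simpa using hr)
    _ = 2 * π / (r⁻¹ - r) := by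
        rw [smul_eq_mul, div_eq_mul_inv, ← neg_sub r, inv_neg]
        linear_combination (2 * π * (r - r⁻¹)⁻¹) * Complex.I_sq

theorem integral_inv_add_inv_sub_two_mul_cos_zero_pi {r : ℂ} (hr0 : r ≠ 0) (hr : ‖r‖ < 1) :
    ∫ θ in 0..π, (r + r⁻¹ - 2 * (cos θ : ℂ))⁻¹ = π / (r⁻¹ - r) := by
  have hcont : Continuous fun θ => (r + r⁻¹ - 2 * (cos θ : ℂ))⁻¹ :=
    Continuous.inv₀ (by fun_prop) (add_inv_sub_two_mul_cos_ne_zero hr0 hr.ne)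
  have h := integral_inv_add_inv_sub_two_mul_cos hr0 hr
  rw [integral_comp_cos_zero_two_pi_eq_two_smul
    (f := fun t : ℝ => (r + r⁻¹ - 2 * (t : ℂ))⁻¹) hcont, Complex.real_smul,
    Complex.ofReal_ofNat] at h
  linear_combination h / 2

noncomputable def reflectedMarchenkoPasturDensity (x : ℝ) : ℝ :=
  1 / (2 * π) * √(4 + x) / √(-x)

theorem two_mul_sin_mul_reflectedMarchenkoPasturDensity {θ : ℝ} (hθ : θ ∈ Ioo 0 π) :
    2 * sin θ * reflectedMarchenkoPasturDensity (2 * cos θ - 2) = (1 + cos θ) / π := by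
  have hsin := sin_pos_of_pos_of_lt_pi hθ.1 hθ.2
  have hcos : cos θ < 1 := by nlinarith [sin_sq_add_cos_sq θ, neg_one_le_cos θ]
  have hplus : 0 ≤ 2 + 2 * cos θ := by linarith [neg_one_le_cos θ]
  have hsqrt : √(2 + 2 * cos θ) * √(2 - 2 * cos θ) = 2 * sin θ := by
    rw [← sqrt_mul hplus, ← sqrt_sq (by positivity : 0 ≤ 2 * sin θ)]
    congr 1
    linear_combination -4 * sin_sq_add_cos_sq θ
  have hminus : 0 < √(2 - 2 * cos θ) := sqrt_pos.2 (by linarith)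
  unfold reflectedMarchenkoPasturDensity
  rw [show 4 + (2 * cos θ - 2) = 2 + 2 * cos θ by ring,
    show -(2 * cos θ - 2) = 2 - 2 * cos θ by ring, ← hsqrt]
  generalize √(2 - 2 * cos θ) = m at hminus ⊢
  field_simp
  exact sq_sqrt (by linarith)

theorem integral_reflectedMarchenkoPasturDensity_smul {E : Type*} [NormedAddCommGroup E]
    [NormedSpace ℝ E] (g : ℝ → E) :
    ∫ x in (-4)..0, reflectedMarchenkoPasturDensity x • g x
      = ∫ θ in 0..π, ((1 + cos θ) / π) • g (2 * cos θ - 2) := by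
  have haffine := integral_comp_mul_sub (fun x => reflectedMarchenkoPasturDensity x • g x)
    (two_ne_zero (α := ℝ)) 2 (a := -1) (b := 1)
  norm_num at haffine
  rw [one_div, eq_inv_smul_iff₀ two_ne_zero] at haffine
  rw [← haffine, integral_of_le (by norm_num), integral_Ioc_eq_integral_Ioo,
    integral_Ioo_neg_one_one_eq_integral_sin_smul, integral_of_le pi_pos.le,
    integral_Ioc_eq_integral_Ioo, ← MeasureTheory.integral_smul]
  refine setIntegral_congr_fun measurableSet_Ioo fun θ hθ => ?_
  simp only [smul_smul, ← mul_assoc, two_mul_sin_mul_reflectedMarchenkoPasturDensity hθ]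

theorem integral_reflectedMarchenkoPasturDensity :
    ∫ x in (-4)..0, reflectedMarchenkoPasturDensity x = 1 := by
  simpa [div_eq_inv_mul, intervalIntegral.integral_const_mul, pi_ne_zero] using
    integral_reflectedMarchenkoPasturDensity_smul (fun _ => (1 : ℝ))

theorem integral_reflectedMarchenkoPasturDensity_div_sub {r : ℂ} (hr0 : r ≠ 0) (hr : ‖r‖ < 1) :
    ∫ x in (-4)..0, (reflectedMarchenkoPasturDensity x : ℂ) / (r + r⁻¹ - 2 - x)
      = r / (1 - r) := by
  have hne := add_inv_sub_two_mul_cos_ne_zero hr0 hr.ne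
  have hcont : Continuous fun θ => (r + r⁻¹ - 2 * (cos θ : ℂ))⁻¹ :=
    Continuous.inv₀ (by fun_prop) hne
  calc ∫ x in (-4)..0, (reflectedMarchenkoPasturDensity x : ℂ) / (r + r⁻¹ - 2 - x)
      = ∫ θ in 0..π, ((1 + cos θ) / π : ℝ) • (r + r⁻¹ - 2 * (cos θ : ℂ))⁻¹ := by
        simpa [div_eq_mul_inv, Complex.real_smul, sub_sub] using
          integral_reflectedMarchenkoPasturDensity_smul fun x => (r + r⁻¹ - 2 - x)⁻¹
    _ = ∫ θ in 0..π,
          (-(1 / (2 * π)) + (r + r⁻¹ + 2) / (2 * π) * (r + r⁻¹ - 2 * (cos θ : ℂ))⁻¹) := by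
        refine integral_congr fun θ _ => ?_
        have hθ := hne θ
        rw [Complex.real_smul, Complex.ofReal_div, Complex.ofReal_add, Complex.ofReal_one]
        generalize r + r⁻¹ = c at hθ ⊢
        generalize (cos θ : ℂ) = t at hθ ⊢
        linear_combination (-1 / (2 * π)) * mul_inv_cancel₀ hθ
    _ = r / (1 - r) := by
        rw [integral_add intervalIntegrable_const ((hcont.const_mul _).intervalIntegrable _ _),
          intervalIntegral.integral_const, intervalIntegral.integral_const_mul,
          integral_inv_add_inv_sub_two_mul_cos_zero_pi hr0 hr, sub_zero, Complex.real_smul]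
        have h1 : 1 - r ≠ 0 := sub_ne_zero.2 fun h => by simp [← h] at hr
        have h2 : 1 + r ≠ 0 := fun h => by simp [eq_neg_of_add_eq_zero_right h] at hr
        have h3 : 1 - r ^ 2 ≠ 0 := by
          rw [show 1 - r ^ 2 = (1 - r) * (1 + r) by ring]; exact mul_ne_zero h1 h2
        field_simp
        ring

/-- The probability measure on [−4,0] with density (1/2π)·√(4+x)/√(−x) has total mass 1 and
its Cauchy transform satisfies μ̂² + μ̂ = 1/z off [−4,0]. -/
theorem cauchy_transform_example :
    (∫ x in (-4:ℝ)..0, (1 / (2 * Real.pi)) * Real.sqrt (4 + x) / Real.sqrt (-x)) = 1 ∧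
    ∀ z : ℂ, z ∉ {w : ℂ | w.im = 0 ∧ -4 ≤ w.re ∧ w.re ≤ 0} →
      (∫ x in (-4:ℝ)..0,
          (((1 / (2 * Real.pi)) * Real.sqrt (4 + x) / Real.sqrt (-x) : ℝ) : ℂ) /
            (z - (x : ℂ))) ^ 2 +
        (∫ x in (-4:ℝ)..0,
          (((1 / (2 * Real.pi)) * Real.sqrt (4 + x) / Real.sqrt (-x) : ℝ) : ℂ) /
            (z - (x : ℂ))) = 1 / z := by
  refine ⟨integral_reflectedMarchenkoPasturDensity, fun z hz => ?_⟩
  obtain ⟨r, hr0, hr, hzr⟩ := exists_norm_lt_one_eq_add_inv (c := z + 2) fun ⟨him, hlo, hhi⟩ =>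
    hz ⟨by simpa using him, by simp only [Complex.add_re, Complex.re_ofNat] at hlo; linarith,
      by simp only [Complex.add_re, Complex.re_ofNat] at hhi; linarith⟩
  obtain rfl : z = r + r⁻¹ - 2 := by linear_combination hzr
  have hcauchy := integral_reflectedMarchenkoPasturDensity_div_sub hr0 hr
  unfold reflectedMarchenkoPasturDensity at hcauchy
  rw [hcauchy]
  have h1 : 1 - r ≠ 0 := sub_ne_zero.2 fun h => by simp [← h] at hr
  rw [show r + r⁻¹ - 2 = (1 - r) ^ 2 / r by field_simp; ring]
  field_simp
  ring
end
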